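/- arXiv:2404.16707 — 3 statements merged into one kernel-verified Lean document; each statement's English description precedes it below -/
import Mathlib

section
/- Let n ∈ ℕ, 0 < α < n, N > 0, and let f : ℝⁿ → ℝ be measurable with ‖f‖_{M^α_1(ℝⁿ)} < ∞. Define the modified Riesz potential Ĩ^N_α f(x) := (1/γ(α)) ∫_{ℝⁿ} ( |x−y|^(α−n) − χ_{{|y|>N}}(y) |y|^(α−n) ) f(y) dy. Then Ĩ^N_α f ∈ L¹_loc(ℝⁿ); more precisely, for every M with N < M < ∞, ∫_{|x|<M} |Ĩ^N_α f(x)| dx < ∞. -/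
open MeasureTheory Filter Set Metric ENNReal

noncomputable section

abbrev Rn (n : ℕ) := EuclideanSpace ℝ (Fin n)

/-- The open axis-parallel cube with center `z` and side length `l`. -/
def cube (n : ℕ) (z : Rn n) (l : ℝ) : Set (Rn n) := {x | ∀ i, |x i - z i| < l / 2}

/-- The `β`-dimensional Hausdorff content `H^β_∞`. -/
def hContent (n : ℕ) (β : ℝ) (E : Set (Rn n)) : ℝ≥0∞ :=
  ⨅ (c : ℕ → Rn n) (r : ℕ → NNReal) (_ : E ⊆ ⋃ i, Metric.ball (c i) (r i)),
    ∑' i, ENNReal.ofReal (Real.pi ^ (β / 2) / Real.Gamma (β / 2 + 1) * (r i : ℝ) ^ β)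

/-- Choquet integral of `g` over `Ω` with respect to `H^β_∞`. -/
def choquet (n : ℕ) (β : ℝ) (Ω : Set (Rn n)) (g : Rn n → ℝ) : ℝ≥0∞ :=
  ∫⁻ t in Set.Ioi (0 : ℝ), hContent n β {x | x ∈ Ω ∧ t < g x}

/-- The normalization constant `γ(α)` of the Riesz potential. -/
def rieszConst (n : ℕ) (α : ℝ) : ℝ :=
  Real.pi ^ ((n : ℝ) / 2) * 2 ^ α * Real.Gamma (α / 2) / Real.Gamma (((n : ℝ) - α) / 2)

/-- The Riesz potential `I_α f`. -/
def riesz (n : ℕ) (α : ℝ) (f : Rn n → ℝ) (x : Rn n) : ℝ :=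
  (rieszConst n α)⁻¹ * ∫ y, f y / ‖x - y‖ ^ ((n : ℝ) - α)

/-- The `BMO^β` seminorm. -/
def bmoBeta (n : ℕ) (β : ℝ) (u : Rn n → ℝ) : ℝ≥0∞ :=
  ⨆ (z : Rn n) (l : ℝ) (_ : 0 < l),
    ⨅ c : ℝ, choquet n β (cube n z l) (fun x => |u x - c|) / ENNReal.ofReal (l ^ β)

/-- The Morrey norm `‖f‖_{M^α_p}`. -/
def morrey (n : ℕ) (α p : ℝ) (f : Rn n → ℝ) : ℝ≥0∞ :=
  ⨆ (z : Rn n) (l : ℝ) (_ : 0 < l),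
    ENNReal.ofReal (l ^ α) *
      ((∫⁻ y in cube n z l, ENNReal.ofReal (|f y| ^ p)) / ENNReal.ofReal (l ^ (n : ℝ))) ^ (1 / p)

/-- The weak Lebesgue norm `‖f‖_{L^{q,∞}}`. -/
def weakNorm (n : ℕ) (q : ℝ) (f : Rn n → ℝ) : ℝ≥0∞ :=
  ⨆ (lam : ℝ) (_ : 0 < lam),
    ENNReal.ofReal lam * (volume {x : Rn n | lam < |f x|}) ^ (1 / q)

/-- The classical `BMO` seminorm. -/
def bmoSemi (n : ℕ) (u : Rn n → ℝ) : ℝ≥0∞ :=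
  ⨆ (z : Rn n) (l : ℝ) (_ : 0 < l),
    (∫⁻ x in cube n z l, ENNReal.ofReal |u x - ⨍ y in cube n z l, u y|) / volume (cube n z l)

/-- The fractional maximal function `M_η f`. -/
def fracMax (n : ℕ) (η : ℝ) (f : Rn n → ℝ) (x : Rn n) : ℝ≥0∞ :=
  ⨆ (r : ℝ) (_ : 0 < r),
    ENNReal.ofReal (r ^ (η - (n : ℝ))) * ∫⁻ y in Metric.ball x r, ENNReal.ofReal |f y|

/-- The modified Riesz potential `Ĩ^N_α f`. -/
def modRiesz (n : ℕ) (α N : ℝ) (f : Rn n → ℝ) (x : Rn n) : ℝ :=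
  (rieszConst n α)⁻¹ *
    ∫ y, (1 / ‖x - y‖ ^ ((n : ℝ) - α) -
      (if N < ‖y‖ then 1 / ‖y‖ ^ ((n : ℝ) - α) else 0)) * f y

lemma aux_coord {n : ℕ} (x : Rn n) (i : Fin n) : |x i| ≤ ‖x‖ := by
  rw [EuclideanSpace.norm_eq, show |x i| = Real.sqrt ((x i)^2) by rw [Real.sqrt_sq_eq_abs]]
  apply Real.sqrt_le_sqrt
  simp only [Real.norm_eq_abs, sq_abs]
  exact Finset.single_le_sum (f := fun j => (x j)^2) (fun j _ => sq_nonneg _) (Finset.mem_univ i)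

lemma ball_subset_cube {n : ℕ} {R : ℝ} : Metric.ball (0 : Rn n) R ⊆ cube n 0 (2*R) := by
  intro x hx
  rw [mem_ball_zero_iff] at hx
  intro i
  have h0 : (0 : Rn n) i = 0 := rfl
  rw [h0, sub_zero]
  calc |x i| ≤ ‖x‖ := aux_coord x i
    _ < R := hx
    _ = 2*R/2 := by ring

lemma geom_rec {c : ℕ → ℝ} {r : ℝ} (h : ∀ k, c (k+1) = c k * r) : ∀ k, c k = c 0 * r ^ k := by
  intro k
  induction k with
  | zero => simp
  | succ m ih => rw [h m, ih]; ring

lemma morrey_cube {n : ℕ} {α : ℝ} {f : Rn n → ℝ} (l : ℝ) (hl : 0 < l) :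
    ∫⁻ y in cube n 0 l, ENNReal.ofReal |f y| ≤
      morrey n α 1 f * ENNReal.ofReal (l ^ ((n : ℝ) - α)) := by
  set B := ∫⁻ y in cube n 0 l, ENNReal.ofReal |f y| with hB
  have hterm : ENNReal.ofReal (l ^ α) * (B / ENNReal.ofReal (l ^ (n:ℝ))) ≤ morrey n α 1 f := by
    have : ENNReal.ofReal (l ^ α) *
        ((∫⁻ y in cube n 0 l, ENNReal.ofReal (|f y| ^ (1:ℝ))) / ENNReal.ofReal (l ^ (n : ℝ)))
          ^ (1/(1:ℝ)) ≤ morrey n α 1 f :=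
      le_iSup_of_le (0 : Rn n) (le_iSup_of_le l (le_iSup_of_le hl le_rfl))
    simpa using this
  have hα0 : ENNReal.ofReal (l ^ α) ≠ 0 := by
    simp only [ne_eq, ENNReal.ofReal_eq_zero, not_le]; positivity
  have hαt : ENNReal.ofReal (l ^ α) ≠ ⊤ := ofReal_ne_top
  have hn0 : ENNReal.ofReal (l ^ (n:ℝ)) ≠ 0 := by
    simp only [ne_eq, ENNReal.ofReal_eq_zero, not_le]; positivity
  have hnt : ENNReal.ofReal (l ^ (n:ℝ)) ≠ ⊤ := ofReal_ne_top
  have h1 : B / ENNReal.ofReal (l ^ (n:ℝ)) ≤ morrey n α 1 f / ENNReal.ofReal (l ^ α) := by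
    rw [ENNReal.le_div_iff_mul_le (Or.inl hα0) (Or.inl hαt), mul_comm]
    exact hterm
  calc B = ENNReal.ofReal (l ^ (n:ℝ)) * (B / ENNReal.ofReal (l ^ (n:ℝ))) :=
        (ENNReal.mul_div_cancel hn0 hnt).symm
    _ ≤ ENNReal.ofReal (l ^ (n:ℝ)) * (morrey n α 1 f / ENNReal.ofReal (l ^ α)) := by
        exact mul_le_mul_right h1 _
    _ = morrey n α 1 f * (ENNReal.ofReal (l ^ (n:ℝ)) / ENNReal.ofReal (l ^ α)) := by
        rw [ENNReal.div_eq_inv_mul, ENNReal.div_eq_inv_mul]; ring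
    _ = morrey n α 1 f * ENNReal.ofReal (l ^ ((n:ℝ) - α)) := by
        rw [← ENNReal.ofReal_div_of_pos (Real.rpow_pos_of_pos hl _), ← Real.rpow_sub hl]

lemma morrey_ball {n : ℕ} {α : ℝ} {f : Rn n → ℝ} (R : ℝ) (hR : 0 < R) :
    ∫⁻ y in Metric.ball (0 : Rn n) R, ENNReal.ofReal |f y| ≤
      morrey n α 1 f * ENNReal.ofReal ((2*R) ^ ((n : ℝ) - α)) := by
  calc ∫⁻ y in Metric.ball (0 : Rn n) R, ENNReal.ofReal |f y|
      ≤ ∫⁻ y in cube n 0 (2*R), ENNReal.ofReal |f y| := lintegral_mono_set ball_subset_cube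
    _ ≤ _ := morrey_cube (2*R) (by linarith)

lemma cover_far {n : ℕ} {R : ℝ} (hR : 0 < R) :
    {y : Rn n | R < ‖y‖} ⊆ ⋃ k : ℕ, {y | R * 2^k ≤ ‖y‖ ∧ ‖y‖ < R * 2^(k+1)} := by
  intro y hy
  have hy' : R < ‖y‖ := hy
  have hex : ∃ m : ℕ, ‖y‖ < R * 2^m := by
    obtain ⟨m, hm⟩ := pow_unbounded_of_one_lt (‖y‖ / R) (one_lt_two (α := ℝ))
    exact ⟨m, by rwa [div_lt_iff₀ hR, mul_comm] at hm⟩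
  classical
  set m₀ := Nat.find hex with hm₀
  have hspec : ‖y‖ < R * 2^m₀ := Nat.find_spec hex
  have hm0 : m₀ ≠ 0 := by
    intro h
    rw [h] at hspec; simp at hspec; linarith
  obtain ⟨k, hk⟩ := Nat.exists_eq_succ_of_ne_zero hm0
  refine mem_iUnion.2 ⟨k, ?_, ?_⟩
  · exact not_lt.1 (Nat.find_min hex (m := k) (by omega))
  · rw [hk] at hspec; exact hspec

lemma cover_near {n : ℕ} {R : ℝ} (hR : 0 < R) :
    Metric.ball (0 : Rn n) R ⊆
      {0} ∪ ⋃ k : ℕ, {y | R * (2⁻¹:ℝ)^(k+1) ≤ ‖y‖ ∧ ‖y‖ < R * (2⁻¹:ℝ)^k} := by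
  intro y hy
  rw [mem_ball_zero_iff] at hy
  rcases eq_or_ne y 0 with h | h
  · exact Or.inl h
  have hpos : 0 < ‖y‖ := norm_pos_iff.2 h
  have hex : ∃ m : ℕ, R * (2⁻¹:ℝ)^m ≤ ‖y‖ := by
    obtain ⟨m, hm⟩ := exists_pow_lt_of_lt_one (x := ‖y‖ / R) (y := (2⁻¹:ℝ))
      (by positivity) (by norm_num)
    exact ⟨m, by rw [lt_div_iff₀ hR] at hm; linarith⟩
  classical
  set m₀ := Nat.find hex with hm₀
  have hspec : R * (2⁻¹:ℝ)^m₀ ≤ ‖y‖ := Nat.find_spec hex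
  have hm0 : m₀ ≠ 0 := by
    intro hz
    rw [hz] at hspec; simp at hspec; linarith
  obtain ⟨k, hk⟩ := Nat.exists_eq_succ_of_ne_zero hm0
  refine Or.inr (mem_iUnion.2 ⟨k, ?_, ?_⟩)
  · rw [hk] at hspec; exact hspec
  · exact not_le.1 (Nat.find_min hex (m := k) (by omega))

lemma shell_bound {n : ℕ} {p a b : ℝ} (hp : p ≤ 0) (ha : 0 < a) (w : Rn n → ℝ≥0∞) :
    ∫⁻ y in {y : Rn n | a ≤ ‖y‖ ∧ ‖y‖ < b}, ENNReal.ofReal (‖y‖ ^ p) * w y ≤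
      ENNReal.ofReal (a ^ p) * ∫⁻ y in Metric.ball (0 : Rn n) b, w y := by
  have hS : MeasurableSet {y : Rn n | a ≤ ‖y‖ ∧ ‖y‖ < b} :=
    (measurableSet_le measurable_const measurable_norm).inter
      (measurableSet_lt measurable_norm measurable_const)
  calc ∫⁻ y in {y : Rn n | a ≤ ‖y‖ ∧ ‖y‖ < b}, ENNReal.ofReal (‖y‖ ^ p) * w y
      ≤ ∫⁻ y in {y : Rn n | a ≤ ‖y‖ ∧ ‖y‖ < b}, ENNReal.ofReal (a ^ p) * w y := by
        refine setLIntegral_mono' hS fun y hy => ?_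
        exact mul_le_mul_left
          (ENNReal.ofReal_le_ofReal (Real.rpow_le_rpow_of_nonpos ha hy.1 hp)) _
    _ = ENNReal.ofReal (a ^ p) * ∫⁻ y in {y : Rn n | a ≤ ‖y‖ ∧ ‖y‖ < b}, w y :=
        lintegral_const_mul' _ _ ofReal_ne_top
    _ ≤ _ := by
        refine mul_le_mul_right (lintegral_mono_set fun y hy => ?_) _
        exact mem_ball_zero_iff.2 hy.2

lemma tsum_geom_lt_top {C : ℝ≥0∞} (hC : C ≠ ⊤) {c : ℕ → ℝ} {r : ℝ} (hr0 : 0 ≤ r) (hr1 : r < 1)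
    (hrec : ∀ k, c (k+1) = c k * r) :
    ∑' k, C * ENNReal.ofReal (c k) < ⊤ := by
  have hck : ∀ k, c k = c 0 * r ^ k := geom_rec hrec
  calc ∑' k, C * ENNReal.ofReal (c k)
      ≤ ∑' k, (C * ENNReal.ofReal |c 0|) * (ENNReal.ofReal r)^k := by
        refine ENNReal.tsum_le_tsum fun k => ?_
        rw [hck k, mul_assoc]
        refine mul_le_mul_right ?_ C
        calc ENNReal.ofReal (c 0 * r ^ k) ≤ ENNReal.ofReal (|c 0| * r ^ k) := by
              refine ENNReal.ofReal_le_ofReal ?_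
              have : (0:ℝ) ≤ r ^ k := by positivity
              nlinarith [le_abs_self (c 0)]
          _ = ENNReal.ofReal |c 0| * (ENNReal.ofReal r)^k := by
              rw [ENNReal.ofReal_mul (abs_nonneg _), ENNReal.ofReal_pow hr0]
    _ = (C * ENNReal.ofReal |c 0|) * ∑' k, (ENNReal.ofReal r)^k := ENNReal.tsum_mul_left
    _ < ⊤ := by
        rw [ENNReal.tsum_geometric]
        refine ENNReal.mul_lt_top (by finiteness) ?_
        rw [ENNReal.inv_lt_top]
        have : ENNReal.ofReal r < 1 := by
          rw [← ENNReal.ofReal_one]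
          exact ENNReal.ofReal_lt_ofReal_iff_of_nonneg hr0 |>.2 hr1
        exact tsub_pos_of_lt this

lemma kernel_ball {n : ℕ} {α : ℝ} (hα0 : 0 < α) (hαn : α < n) {R : ℝ} (hR : 0 < R) :
    ∫⁻ z in Metric.ball (0:Rn n) R, ENNReal.ofReal (‖z‖ ^ (α - (n:ℝ))) < ⊤ := by
  have hnR : (0:ℝ) < (n:ℝ) := hα0.trans hαn
  have hn : 0 < n := by exact_mod_cast hnR
  haveI : Nonempty (Fin n) := ⟨⟨0, hn⟩⟩
  set p := α - (n:ℝ) with hp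
  have hple : p ≤ 0 := by rw [hp]; linarith
  set q := (2⁻¹ : ℝ) with hq
  have hqpos : (0:ℝ) < q := by norm_num
  set V := volume (Metric.ball (0:Rn n) 1) with hV
  have hVne : V ≠ ⊤ := measure_ball_lt_top.ne
  set c : ℕ → ℝ := fun k => (R * q^(k+1))^p * (R * q^k)^n with hc
  have hshell : ∀ k : ℕ,
      ∫⁻ z in {y : Rn n | R*q^(k+1) ≤ ‖y‖ ∧ ‖y‖ < R*q^k}, ENNReal.ofReal (‖z‖ ^ p) ≤
        V * ENNReal.ofReal (c k) := by
    intro k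
    calc ∫⁻ z in {y : Rn n | R*q^(k+1) ≤ ‖y‖ ∧ ‖y‖ < R*q^k}, ENNReal.ofReal (‖z‖ ^ p)
        = ∫⁻ z in {y : Rn n | R*q^(k+1) ≤ ‖y‖ ∧ ‖y‖ < R*q^k},
            ENNReal.ofReal (‖z‖ ^ p) * (fun _ : Rn n => (1:ℝ≥0∞)) z := by simp
      _ ≤ ENNReal.ofReal ((R*q^(k+1))^p) *
            ∫⁻ _ in Metric.ball (0:Rn n) (R*q^k), (1:ℝ≥0∞) :=
          shell_bound hple (by positivity) _
      _ = ENNReal.ofReal ((R*q^(k+1))^p) * volume (Metric.ball (0:Rn n) (R*q^k)) := by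
          rw [setLIntegral_one]
      _ = ENNReal.ofReal ((R*q^(k+1))^p) * (ENNReal.ofReal ((R*q^k)^n) * V) := by
          rw [Measure.addHaar_ball_of_pos _ _ (by positivity), finrank_euclideanSpace_fin]
      _ = V * ENNReal.ofReal (c k) := by
          rw [hc, ENNReal.ofReal_mul (by positivity)]; ring
  set r : ℝ := q^p * q^(n:ℕ) with hr
  have hr0 : 0 ≤ r := by positivity
  have hr1 : r < 1 := by
    have h1 : r = q ^ (p + (n:ℝ)) := by
      rw [hr, Real.rpow_add hqpos, Real.rpow_natCast]
    have h2 : p + (n:ℝ) = α := by rw [hp]; ring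
    rw [h1, h2]
    exact Real.rpow_lt_one (by norm_num) (by norm_num) hα0
  have hrec : ∀ k, c (k+1) = c k * r := by
    intro k
    rw [hc, hr]
    show (R*q^(k+1+1))^p * (R*q^(k+1))^n = (R * q^(k+1))^p * (R * q^k)^n * (q^p * q^(n:ℕ))
    rw [show R*q^(k+1+1) = (R*q^(k+1))*q from by ring,
      Real.mul_rpow (by positivity) (by positivity),
      show R*q^(k+1) = (R*q^k)*q from by ring, mul_pow]
    ring
  calc ∫⁻ z in Metric.ball (0:Rn n) R, ENNReal.ofReal (‖z‖ ^ p)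
      ≤ ∫⁻ z in ({0} ∪ ⋃ k : ℕ, {y : Rn n | R*q^(k+1) ≤ ‖y‖ ∧ ‖y‖ < R*q^k}),
          ENNReal.ofReal (‖z‖ ^ p) := lintegral_mono_set (cover_near hR)
    _ ≤ (∫⁻ z in ({0} : Set (Rn n)), ENNReal.ofReal (‖z‖ ^ p)) +
          ∫⁻ z in ⋃ k : ℕ, {y : Rn n | R*q^(k+1) ≤ ‖y‖ ∧ ‖y‖ < R*q^k},
            ENNReal.ofReal (‖z‖ ^ p) := lintegral_union_le _ _ _
    _ ≤ 0 + ∑' k : ℕ, ∫⁻ z in {y : Rn n | R*q^(k+1) ≤ ‖y‖ ∧ ‖y‖ < R*q^k},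
          ENNReal.ofReal (‖z‖ ^ p) :=
        add_le_add (le_of_eq (setLIntegral_measure_zero _ _ (measure_singleton 0)))
          (lintegral_iUnion_le _ _)
    _ ≤ 0 + ∑' k : ℕ, V * ENNReal.ofReal (c k) := by
        gcongr with k
        exact hshell k
    _ < ⊤ := by rw [zero_add]; exact tsum_geom_lt_top hVne hr0 hr1 hrec

lemma far_finite {n : ℕ} {α : ℝ} {f : Rn n → ℝ} (hα0 : 0 < α) (hαn : α < n)
    (hMor : morrey n α 1 f < ⊤) {R : ℝ} (hR : 0 < R) :
    ∫⁻ y in {y : Rn n | R < ‖y‖},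
      ENNReal.ofReal (‖y‖ ^ (α - (n:ℝ) - 1)) * ENNReal.ofReal |f y| < ⊤ := by
  set K := morrey n α 1 f with hK
  have hKne : K ≠ ⊤ := hMor.ne
  set p' := α - (n:ℝ) - 1 with hp'
  have hp'le : p' ≤ 0 := by rw [hp']; have : α < (n:ℝ) := hαn; linarith
  set c : ℕ → ℝ := fun k => (R*2^k)^p' * ((4*R)*2^k)^((n:ℝ)-α) with hc
  have hshell : ∀ k : ℕ,
      ∫⁻ y in {y : Rn n | R*2^k ≤ ‖y‖ ∧ ‖y‖ < R*2^(k+1)},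
        ENNReal.ofReal (‖y‖ ^ p') * ENNReal.ofReal |f y| ≤ K * ENNReal.ofReal (c k) := by
    intro k
    calc ∫⁻ y in {y : Rn n | R*2^k ≤ ‖y‖ ∧ ‖y‖ < R*2^(k+1)},
          ENNReal.ofReal (‖y‖ ^ p') * ENNReal.ofReal |f y|
        ≤ ENNReal.ofReal ((R*2^k)^p') *
            ∫⁻ y in Metric.ball (0:Rn n) (R*2^(k+1)), ENNReal.ofReal |f y| :=
          shell_bound hp'le (by positivity) _
      _ ≤ ENNReal.ofReal ((R*2^k)^p') *
            (K * ENNReal.ofReal ((2*(R*2^(k+1))) ^ ((n:ℝ)-α))) :=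
          mul_le_mul_right (morrey_ball _ (by positivity)) _
      _ = K * ENNReal.ofReal (c k) := by
          rw [show (2:ℝ)*(R*2^(k+1)) = (4*R)*2^k from by ring, hc,
            ENNReal.ofReal_mul (by positivity)]
          ring
  set r : ℝ := 2^p' * 2^((n:ℝ)-α) with hr
  have hr0 : 0 ≤ r := by positivity
  have hr1 : r < 1 := by
    have h1 : r = (2:ℝ) ^ (p' + ((n:ℝ)-α)) := by rw [hr, Real.rpow_add (by norm_num)]
    have h2 : p' + ((n:ℝ)-α) = -1 := by rw [hp']; ring
    rw [h1, h2, Real.rpow_neg_one]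
    norm_num
  have hrec : ∀ k, c (k+1) = c k * r := by
    intro k
    rw [hc, hr]
    show (R*2^(k+1))^p' * ((4*R)*2^(k+1))^((n:ℝ)-α) = _
    have e1 : (R*2^(k+1) : ℝ)^p' = (R*2^k)^p' * 2^p' := by
      rw [show R*2^(k+1) = (R*2^k)*2 from by ring,
        Real.mul_rpow (by positivity) (by positivity)]
    have e2 : ((4*R)*2^(k+1) : ℝ)^((n:ℝ)-α) = ((4*R)*2^k)^((n:ℝ)-α) * 2^((n:ℝ)-α) := by
      rw [show (4*R)*2^(k+1) = ((4*R)*2^k)*2 from by ring,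
        Real.mul_rpow (by positivity) (by positivity)]
    rw [e1, e2]
    ring
  calc ∫⁻ y in {y : Rn n | R < ‖y‖},
        ENNReal.ofReal (‖y‖ ^ p') * ENNReal.ofReal |f y|
      ≤ ∫⁻ y in ⋃ k : ℕ, {y : Rn n | R*2^k ≤ ‖y‖ ∧ ‖y‖ < R*2^(k+1)},
          ENNReal.ofReal (‖y‖ ^ p') * ENNReal.ofReal |f y| :=
        lintegral_mono_set (cover_far hR)
    _ ≤ ∑' k : ℕ, ∫⁻ y in {y : Rn n | R*2^k ≤ ‖y‖ ∧ ‖y‖ < R*2^(k+1)},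
          ENNReal.ofReal (‖y‖ ^ p') * ENNReal.ofReal |f y| := lintegral_iUnion_le _ _
    _ ≤ ∑' k : ℕ, K * ENNReal.ofReal (c k) := ENNReal.tsum_le_tsum hshell
    _ < ⊤ := tsum_geom_lt_top hKne hr0 hr1 hrec

lemma rpow_mvt {p : ℝ} (hp : p < 0) {r a b : ℝ} (hr : 0 < r) (ha : r ≤ a) (hb : r ≤ b) :
    |a ^ p - b ^ p| ≤ (-p) * r^(p-1) * |a - b| := by
  have key : ‖a ^ p - b ^ p‖ ≤ ((-p) * r^(p-1)) * ‖a - b‖ := by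
    refine Convex.norm_image_sub_le_of_norm_hasDerivWithin_le (𝕜 := ℝ)
      (f := fun t : ℝ => t ^ p) (f' := fun t => p * t ^ (p-1)) (s := Set.Ici r)
      (fun x hx => ?_) (fun x hx => ?_) (convex_Ici r) hb ha
    · exact (Real.hasDerivAt_rpow_const
        (Or.inl (ne_of_gt (lt_of_lt_of_le hr hx)))).hasDerivWithinAt
    · have hx0 : 0 < x := lt_of_lt_of_le hr hx
      rw [Real.norm_eq_abs, abs_mul, abs_of_neg hp,
        abs_of_nonneg (Real.rpow_nonneg hx0.le _)]
      exact mul_le_mul_of_nonneg_left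
        (Real.rpow_le_rpow_of_nonpos hr hx (by linarith)) (by linarith)
  simpa [Real.norm_eq_abs] using key

/-- If `‖f‖_{M^α_1} < ∞` then the modified Riesz potential `Ĩ^N_α f ∈ L¹_loc(ℝⁿ)`; more
precisely, `∫_{|x|<M} |Ĩ^N_α f| dx < ∞` for every `M ∈ (N, ∞)`. -/
theorem stmt8 (n : ℕ) (α N : ℝ) (hα0 : 0 < α) (hαn : α < n) (hN : 0 < N)
    (f : Rn n → ℝ) (hf : Measurable f) (hMor : morrey n α 1 f < ⊤) :
    LocallyIntegrable (modRiesz n α N f) volume ∧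
      ∀ M : ℝ, N < M →
        (∫⁻ x in Metric.ball (0 : Rn n) M, ENNReal.ofReal |modRiesz n α N f x|) < ⊤ := by
  have hnR : (0:ℝ) < (n:ℝ) := hα0.trans hαn
  set c0 : ℝ := (rieszConst n α)⁻¹ with hc0
  set p : ℝ := α - (n:ℝ) with hpdef
  have hplt : p < 0 := by rw [hpdef]; linarith
  set kern : Rn n → Rn n → ℝ := fun x y =>
    1 / ‖x - y‖ ^ ((n : ℝ) - α) - (if N < ‖y‖ then 1 / ‖y‖ ^ ((n : ℝ) - α) else 0) with hkern
  have hone : ∀ t : ℝ, 0 ≤ t → 1 / t ^ ((n:ℝ) - α) = t ^ p := by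
    intro t ht
    rw [hpdef, show α - (n:ℝ) = -((n:ℝ) - α) from by ring, Real.rpow_neg ht, one_div]
  -- measurability of the kernel
  have hrmeas : Measurable fun t : ℝ => 1 / t ^ ((n:ℝ) - α) := by fun_prop
  have hkmeas : Measurable (fun q : Rn n × Rn n => kern q.1 q.2) := by
    rw [hkern]
    have h1 : Measurable fun q : Rn n × Rn n => 1 / ‖q.1 - q.2‖ ^ ((n:ℝ) - α) :=
      hrmeas.comp (measurable_fst.sub measurable_snd).norm
    have h2 : Measurable fun q : Rn n × Rn n =>
        (if N < ‖q.2‖ then 1 / ‖q.2‖ ^ ((n:ℝ) - α) else 0) := by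
      refine Measurable.ite ?_ (hrmeas.comp measurable_snd.norm) measurable_const
      exact measurableSet_lt measurable_const measurable_snd.norm
    exact h1.sub h2
  have hmeas : StronglyMeasurable (modRiesz n α N f) := by
    have hF : StronglyMeasurable (fun q : Rn n × Rn n => kern q.1 q.2 * f q.2) :=
      (hkmeas.mul (hf.comp measurable_snd)).stronglyMeasurable
    have h2 : StronglyMeasurable (fun x : Rn n => ∫ y, kern x y * f y) :=
      hF.integral_prod_right'
    exact stronglyMeasurable_const.mul h2
  -- the key finiteness bound
  have key : ∀ M : ℝ, N < M →
      (∫⁻ x in Metric.ball (0 : Rn n) M, ENNReal.ofReal |modRiesz n α N f x|) < ⊤ := by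
    intro M hM
    have hM0 : 0 < M := hN.trans hM
    set I : Rn n → ℝ≥0∞ := fun y =>
      (∫⁻ x in Metric.ball (0:Rn n) M, ENNReal.ofReal |kern x y|) * ENNReal.ofReal |f y| with hI
    have step1 : ∀ x, ENNReal.ofReal |modRiesz n α N f x| ≤
        ENNReal.ofReal |c0| * ∫⁻ y, ENNReal.ofReal (|kern x y| * |f y|) := by
      intro x
      have hmr : modRiesz n α N f x = c0 * ∫ y, kern x y * f y := rfl
      rw [hmr, abs_mul, ENNReal.ofReal_mul (abs_nonneg _)]
      refine mul_le_mul_right ?_ _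
      calc ENNReal.ofReal |∫ y, kern x y * f y| = (‖∫ y, kern x y * f y‖₊ : ℝ≥0∞) :=
            (Real.enorm_eq_ofReal_abs _).symm
        _ ≤ ∫⁻ y, (‖kern x y * f y‖₊ : ℝ≥0∞) := enorm_integral_le_lintegral_enorm _
        _ = ∫⁻ y, ENNReal.ofReal (|kern x y| * |f y|) := by
            simp_rw [← enorm_eq_nnnorm, Real.enorm_eq_ofReal_abs, abs_mul]
    have swap : (∫⁻ x in Metric.ball (0:Rn n) M,
          ∫⁻ y, ENNReal.ofReal (|kern x y| * |f y|)) =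
        ∫⁻ y, ∫⁻ x in Metric.ball (0:Rn n) M, ENNReal.ofReal (|kern x y| * |f y|) := by
      refine lintegral_lintegral_swap ?_
      exact ((hkmeas.abs.mul ((hf.comp measurable_snd).abs)).ennreal_ofReal).aemeasurable
    have hfac : ∀ y, (∫⁻ x in Metric.ball (0:Rn n) M,
        ENNReal.ofReal (|kern x y| * |f y|)) = I y := by
      intro y
      rw [hI]
      simp_rw [ENNReal.ofReal_mul (abs_nonneg _)]
      exact lintegral_mul_const' _ _ ofReal_ne_top
    -- part A : near region
    set CA : ℝ≥0∞ := (∫⁻ z in Metric.ball (0:Rn n) (3*M), ENNReal.ofReal (‖z‖^p)) +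
      volume (Metric.ball (0:Rn n) M) * ENNReal.ofReal (N^p) with hCA
    have hCAne : CA ≠ ⊤ := by
      rw [hCA]
      have h1 := kernel_ball (n := n) hα0 hαn (R := 3*M) (by linarith)
      rw [← hpdef] at h1
      exact (ENNReal.add_lt_top.2 ⟨h1, ENNReal.mul_lt_top measure_ball_lt_top ofReal_lt_top⟩).ne
    have htrans : ∀ y : Rn n, ‖y‖ ≤ 2*M →
        (∫⁻ x in Metric.ball (0:Rn n) M, ENNReal.ofReal (‖x - y‖^p)) ≤
        ∫⁻ z in Metric.ball (0:Rn n) (3*M), ENNReal.ofReal (‖z‖^p) := by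
      intro y0 hy0
      set g : Rn n → ℝ≥0∞ :=
        (Metric.ball (0:Rn n) (3*M)).indicator (fun z => ENNReal.ofReal (‖z‖^p)) with hg
      calc ∫⁻ x in Metric.ball (0:Rn n) M, ENNReal.ofReal (‖x - y0‖^p)
          ≤ ∫⁻ x in Metric.ball (0:Rn n) M, g (x - y0) := by
            refine setLIntegral_mono' measurableSet_ball fun x hx => ?_
            rw [mem_ball_zero_iff] at hx
            have hmem : x - y0 ∈ Metric.ball (0:Rn n) (3*M) := by
              rw [mem_ball_zero_iff]
              calc ‖x - y0‖ ≤ ‖x‖ + ‖y0‖ := norm_sub_le _ _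
                _ < 3*M := by linarith
            rw [hg, indicator_of_mem hmem]
        _ ≤ ∫⁻ x, g (x - y0) := setLIntegral_le_lintegral _ _
        _ = ∫⁻ z, g z := lintegral_sub_right_eq_self g y0
        _ = ∫⁻ z in Metric.ball (0:Rn n) (3*M), ENNReal.ofReal (‖z‖^p) := by
            rw [hg, lintegral_indicator measurableSet_ball]
    have hballkern : ∀ y ∈ Metric.closedBall (0:Rn n) (2*M),
        (∫⁻ x in Metric.ball (0:Rn n) M, ENNReal.ofReal |kern x y|) ≤ CA := by
      intro y hy
      rw [Metric.mem_closedBall, dist_zero_right] at hy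
      have hpt : ∀ x : Rn n, |kern x y| ≤ ‖x - y‖^p + N^p := by
        intro x
        rw [hkern]
        simp only
        rw [hone _ (norm_nonneg _)]
        have habs : |(if N < ‖y‖ then 1 / ‖y‖ ^ ((n:ℝ) - α) else 0)| ≤ N^p := by
          split_ifs with h
          · rw [hone _ (norm_nonneg _), abs_of_nonneg (Real.rpow_nonneg (norm_nonneg _) _)]
            exact Real.rpow_le_rpow_of_nonpos hN h.le hplt.le
          · rw [abs_zero]; exact Real.rpow_nonneg hN.le _
        calc |‖x - y‖^p - (if N < ‖y‖ then 1 / ‖y‖ ^ ((n:ℝ) - α) else 0)|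
            = |‖x - y‖^p + -(if N < ‖y‖ then 1 / ‖y‖ ^ ((n:ℝ) - α) else 0)| := by
              rw [sub_eq_add_neg]
          _ ≤ |‖x - y‖^p| + |-(if N < ‖y‖ then 1 / ‖y‖ ^ ((n:ℝ) - α) else 0)| := abs_add_le _ _
          _ ≤ ‖x - y‖^p + N^p := by
              rw [abs_neg, abs_of_nonneg (Real.rpow_nonneg (norm_nonneg _) _)]
              exact add_le_add le_rfl habs
      calc ∫⁻ x in Metric.ball (0:Rn n) M, ENNReal.ofReal |kern x y|
          ≤ ∫⁻ x in Metric.ball (0:Rn n) M,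
              (ENNReal.ofReal (‖x - y‖^p) + ENNReal.ofReal (N^p)) := by
            refine setLIntegral_mono' measurableSet_ball fun x _ => ?_
            calc ENNReal.ofReal |kern x y| ≤ ENNReal.ofReal (‖x - y‖^p + N^p) :=
                  ENNReal.ofReal_le_ofReal (hpt x)
              _ = _ := ENNReal.ofReal_add (Real.rpow_nonneg (norm_nonneg _) _)
                    (Real.rpow_nonneg hN.le _)
        _ = (∫⁻ x in Metric.ball (0:Rn n) M, ENNReal.ofReal (‖x - y‖^p)) +
              ENNReal.ofReal (N^p) * volume (Metric.ball (0:Rn n) M) := by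
            rw [lintegral_add_right _ measurable_const, setLIntegral_const]
        _ ≤ (∫⁻ z in Metric.ball (0:Rn n) (3*M), ENNReal.ofReal (‖z‖^p)) +
              volume (Metric.ball (0:Rn n) M) * ENNReal.ofReal (N^p) := by
            exact add_le_add (htrans y hy) (le_of_eq (mul_comm _ _))
        _ = CA := hCA.symm
    have partA : ∫⁻ y in Metric.closedBall (0:Rn n) (2*M), I y < ⊤ := by
      calc ∫⁻ y in Metric.closedBall (0:Rn n) (2*M), I y
          ≤ ∫⁻ y in Metric.closedBall (0:Rn n) (2*M), CA * ENNReal.ofReal |f y| :=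
            setLIntegral_mono' measurableSet_closedBall
              (fun y hy => mul_le_mul_left (hballkern y hy) _)
        _ = CA * ∫⁻ y in Metric.closedBall (0:Rn n) (2*M), ENNReal.ofReal |f y| :=
            lintegral_const_mul' _ _ hCAne
        _ ≤ CA * (morrey n α 1 f * ENNReal.ofReal ((2*(2*M+1))^((n:ℝ)-α))) := by
            refine mul_le_mul_right ?_ _
            refine le_trans (lintegral_mono_set ?_) (morrey_ball (2*M+1) (by linarith))
            exact Metric.closedBall_subset_ball (by linarith)
        _ < ⊤ := ENNReal.mul_lt_top (lt_top_iff_ne_top.2 hCAne)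
            (ENNReal.mul_lt_top hMor ofReal_lt_top)
    -- part B : far region
    set C2 : ℝ := ((n:ℝ) - α) * M * 2^((1:ℝ)-p) with hC2
    have hC2nonneg : 0 ≤ C2 := by
      refine mul_nonneg (mul_nonneg (by linarith) hM0.le) (Real.rpow_nonneg (by norm_num) _)
    have hkfar : ∀ y : Rn n, 2*M < ‖y‖ → ∀ x ∈ Metric.ball (0:Rn n) M,
        |kern x y| ≤ C2 * ‖y‖^(p-1) := by
      intro y hy x hx
      rw [mem_ball_zero_iff] at hx
      have hyN : N < ‖y‖ := by linarith
      have hr2 : ‖y‖/2 ≤ ‖x - y‖ := by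
        have h1 : ‖y‖ - ‖x‖ ≤ ‖y - x‖ := norm_sub_norm_le _ _
        rw [norm_sub_rev] at h1
        linarith
      have hr1 : (0:ℝ) < ‖y‖/2 := by linarith
      have hmvt := rpow_mvt hplt hr1 hr2 (by linarith : ‖y‖/2 ≤ ‖y‖)
      have hkxy : kern x y = ‖x - y‖^p - ‖y‖^p := by
        rw [hkern]
        simp only
        rw [if_pos hyN, hone _ (norm_nonneg _), hone _ (norm_nonneg _)]
      rw [hkxy]
      have habs : |‖x - y‖ - ‖y‖| ≤ M := by
        have h2 : |‖x - y‖ - ‖-y‖| ≤ ‖(x - y) - (-y)‖ := abs_norm_sub_norm_le _ _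
        rw [norm_neg, sub_neg_eq_add, sub_add_cancel] at h2
        linarith
      have hnegp : -p = (n:ℝ) - α := by rw [hpdef]; ring
      calc |‖x - y‖^p - ‖y‖^p| ≤ (-p) * (‖y‖/2)^(p-1) * |‖x - y‖ - ‖y‖| := hmvt
        _ ≤ (-p) * (‖y‖/2)^(p-1) * M := by
            refine mul_le_mul_of_nonneg_left habs ?_
            exact mul_nonneg (by linarith) (Real.rpow_nonneg (by linarith) _)
        _ = C2 * ‖y‖^(p-1) := by
            rw [Real.div_rpow (norm_nonneg _) (by norm_num), div_eq_mul_inv,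
              ← Real.rpow_neg (by norm_num : (0:ℝ) ≤ 2),
              (show -(p-1) = 1 - p from by ring), hC2, hnegp]
            ring
    set CB : ℝ≥0∞ := volume (Metric.ball (0:Rn n) M) * ENNReal.ofReal C2 with hCB
    have hCBne : CB ≠ ⊤ := by
      rw [hCB]; exact (ENNReal.mul_lt_top measure_ball_lt_top ofReal_lt_top).ne
    have hIB : ∀ y : Rn n, 2*M < ‖y‖ →
        I y ≤ CB * (ENNReal.ofReal (‖y‖^(p-1)) * ENNReal.ofReal |f y|) := by
      intro y hy
      rw [hI]
      simp only
      have hinner : (∫⁻ x in Metric.ball (0:Rn n) M, ENNReal.ofReal |kern x y|) ≤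
          ENNReal.ofReal (C2 * ‖y‖^(p-1)) * volume (Metric.ball (0:Rn n) M) := by
        calc ∫⁻ x in Metric.ball (0:Rn n) M, ENNReal.ofReal |kern x y|
            ≤ ∫⁻ _x in Metric.ball (0:Rn n) M, ENNReal.ofReal (C2 * ‖y‖^(p-1)) :=
              setLIntegral_mono' measurableSet_ball fun x hx =>
                ENNReal.ofReal_le_ofReal (hkfar y hy x hx)
          _ = _ := setLIntegral_const _ _
      calc (∫⁻ x in Metric.ball (0:Rn n) M, ENNReal.ofReal |kern x y|) * ENNReal.ofReal |f y|
          ≤ (ENNReal.ofReal (C2 * ‖y‖^(p-1)) * volume (Metric.ball (0:Rn n) M)) *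
              ENNReal.ofReal |f y| := mul_le_mul_left hinner _
        _ = CB * (ENNReal.ofReal (‖y‖^(p-1)) * ENNReal.ofReal |f y|) := by
            rw [hCB, ENNReal.ofReal_mul hC2nonneg]
            ring
    have hcompl : (Metric.closedBall (0:Rn n) (2*M))ᶜ = {y : Rn n | 2*M < ‖y‖} := by
      ext y
      simp [Metric.mem_closedBall, dist_zero_right, not_le]
    have partB : ∫⁻ y in (Metric.closedBall (0:Rn n) (2*M))ᶜ, I y < ⊤ := by
      rw [hcompl]
      calc ∫⁻ y in {y : Rn n | 2*M < ‖y‖}, I y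
          ≤ ∫⁻ y in {y : Rn n | 2*M < ‖y‖},
              CB * (ENNReal.ofReal (‖y‖^(p-1)) * ENNReal.ofReal |f y|) :=
            setLIntegral_mono' (measurableSet_lt measurable_const measurable_norm)
              fun y hy => hIB y hy
        _ = CB * ∫⁻ y in {y : Rn n | 2*M < ‖y‖},
              ENNReal.ofReal (‖y‖^(p-1)) * ENNReal.ofReal |f y| :=
            lintegral_const_mul' _ _ hCBne
        _ < ⊤ := by
            refine ENNReal.mul_lt_top (lt_top_iff_ne_top.2 hCBne) ?_
            have hexp : p - 1 = α - (n:ℝ) - 1 := by rw [hpdef]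
            rw [hexp]
            exact far_finite hα0 hαn hMor (R := 2*M) (by linarith)
    calc ∫⁻ x in Metric.ball (0:Rn n) M, ENNReal.ofReal |modRiesz n α N f x|
        ≤ ∫⁻ x in Metric.ball (0:Rn n) M,
            ENNReal.ofReal |c0| * ∫⁻ y, ENNReal.ofReal (|kern x y| * |f y|) :=
          lintegral_mono step1
      _ = ENNReal.ofReal |c0| * ∫⁻ x in Metric.ball (0:Rn n) M,
            ∫⁻ y, ENNReal.ofReal (|kern x y| * |f y|) :=
          lintegral_const_mul' _ _ ofReal_ne_top
      _ = ENNReal.ofReal |c0| * ∫⁻ y, I y := by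
          rw [swap]
          congr 1
          exact lintegral_congr hfac
      _ = ENNReal.ofReal |c0| * ((∫⁻ y in Metric.closedBall (0:Rn n) (2*M), I y) +
            ∫⁻ y in (Metric.closedBall (0:Rn n) (2*M))ᶜ, I y) := by
          rw [lintegral_add_compl I measurableSet_closedBall]
      _ < ⊤ := ENNReal.mul_lt_top ofReal_lt_top (ENNReal.add_lt_top.2 ⟨partA, partB⟩)
  refine ⟨?_, key⟩
  rw [locallyIntegrable_iff]
  intro K hK
  obtain ⟨r, hr⟩ := hK.isBounded.subset_closedBall 0
  set M : ℝ := max (r+1) (N+1) with hMdef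
  have hNM : N < M := lt_of_lt_of_le (lt_add_one N) (le_max_right _ _)
  have hKM : K ⊆ Metric.ball (0:Rn n) M :=
    hr.trans (Metric.closedBall_subset_ball (lt_of_lt_of_le (lt_add_one r) (le_max_left _ _)))
  refine ⟨hmeas.aestronglyMeasurable.restrict, ?_⟩
  rw [hasFiniteIntegral_iff_norm]
  simp_rw [Real.norm_eq_abs]
  calc ∫⁻ x in K, ENNReal.ofReal |modRiesz n α N f x| ≤
      ∫⁻ x in Metric.ball (0:Rn n) M, ENNReal.ofReal |modRiesz n α N f x| :=
        lintegral_mono_set hKM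
    _ < ⊤ := key M hNM
end
end

section
/- Let n ∈ ℕ, 0 < β₁ ≤ β₂ ≤ n, let Q ⊆ ℝⁿ be a cube, and let f : Q → ℝ. If there is a sequence (φ_j) of bounded continuous functions on Q such that ∫_Q |f − φ_j| dH^{β₁}_∞ → 0 as j → ∞, then also ∫_Q |f − φ_j| dH^{β₂}_∞ → 0 as j → ∞; in fact there is a constant C = C(β₁, β₂) such that for every nonnegative g on Q, ∫_Q g dH^{β₂}_∞ ≤ C · H^{β₁}_∞(Q)^{(β₂/β₁) − 1} ∫_Q g dH^{β₁}_∞. -/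
open MeasureTheory Filter Set Metric ENNReal

noncomputable section

/-! ### Auxiliary lemmas -/

/-- The normalizing constant `ω_β` of Hausdorff content. -/
def om (β : ℝ) : ℝ := Real.pi ^ (β / 2) / Real.Gamma (β / 2 + 1)

lemma om_pos {β : ℝ} (hβ : 0 ≤ β) : 0 < om β := by
  apply div_pos (Real.rpow_pos_of_pos Real.pi_pos _)
  exact Real.Gamma_pos_of_pos (by linarith)

lemma hContent_le (n : ℕ) (β : ℝ) (E : Set (Rn n)) (c : ℕ → Rn n) (r : ℕ → NNReal)
    (h : E ⊆ ⋃ i, Metric.ball (c i) (r i)) :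
    hContent n β E ≤ ∑' i, ENNReal.ofReal (om β * (r i : ℝ) ^ β) := by
  refine iInf_le_of_le c ?_
  refine iInf_le_of_le r ?_
  exact iInf_le _ h

lemma hContent_le_ball {n : ℕ} {β : ℝ} (hβ : 0 < β) {E : Set (Rn n)} {x : Rn n} {R : ℝ}
    (hR : 0 ≤ R) (hE : E ⊆ Metric.ball x R) :
    hContent n β E ≤ ENNReal.ofReal (om β * R ^ β) := by
  have hcov : E ⊆ ⋃ i : ℕ, Metric.ball ((fun _ => x) i)
      ((fun i : ℕ => if i = 0 then R.toNNReal else 0) i : ℝ) := by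
    intro y hy
    refine mem_iUnion.2 ⟨0, ?_⟩
    simpa [Real.coe_toNNReal R hR] using hE hy
  refine (hContent_le n β E _ _ hcov).trans ?_
  rw [tsum_eq_single 0 ?_]
  · simp [Real.coe_toNNReal R hR]
  · intro i hi
    simp [hi, Real.zero_rpow hβ.ne']

lemma cube_subset_ball {n : ℕ} (hn : 0 < n) (z : Rn n) {l : ℝ} (hl : 0 < l) :
    cube n z l ⊆ Metric.ball z (l * Real.sqrt n) := by
  intro x hx
  have hs : (0:ℝ) < Real.sqrt n := Real.sqrt_pos.2 (by exact_mod_cast hn)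
  have h1 : dist x z ≤ Real.sqrt n * (l / 2) := by
    rw [EuclideanSpace.dist_eq]
    have hsum : ∑ i, dist (x i) (z i) ^ 2 ≤ (n : ℝ) * (l / 2) ^ 2 := by
      have key : ∀ i ∈ Finset.univ, dist (x i) (z i) ^ 2 ≤ (l / 2) ^ 2 := by
        intro i _
        have := hx i
        rw [Real.dist_eq]
        nlinarith [abs_nonneg (x i - z i)]
      calc ∑ i, dist (x i) (z i) ^ 2 ≤ ∑ _i : Fin n, (l / 2) ^ 2 := Finset.sum_le_sum key
        _ = (n : ℝ) * (l / 2) ^ 2 := by simp [mul_comm]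
    calc Real.sqrt (∑ i, dist (x i) (z i) ^ 2) ≤ Real.sqrt ((n:ℝ) * (l/2)^2) :=
          Real.sqrt_le_sqrt hsum
      _ = Real.sqrt n * (l / 2) := by
          rw [Real.sqrt_mul (by positivity), Real.sqrt_sq (by positivity)]
  have : Real.sqrt n * (l / 2) < l * Real.sqrt n := by nlinarith
  exact mem_ball.2 (h1.trans_lt this)

lemma volume_cube {n : ℕ} (z : Rn n) {l : ℝ} (hl : 0 < l) :
    volume (cube n z l) = ENNReal.ofReal (l ^ n) := by
  have hpre : cube n z l = ((MeasurableEquiv.toLp 2 (Fin n → ℝ)).symm) ⁻¹'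
      (Set.univ.pi fun i => Set.Ioo (z i - l / 2) (z i + l / 2)) := by
    ext x
    simp only [cube, Set.mem_setOf_eq, Set.mem_preimage, Set.mem_pi, Set.mem_univ, true_implies,
      Set.mem_Ioo]
    refine forall_congr' fun i => ?_
    have heq : ((MeasurableEquiv.toLp 2 (Fin n → ℝ)).symm) x i = x i := rfl
    rw [heq, abs_lt]
    constructor <;> intro h <;> constructor <;> [skip; skip; skip; skip] <;> linarith [h.1, h.2]
  rw [hpre, (EuclideanSpace.volume_preserving_symm_measurableEquiv_toLp (Fin n)).measure_preimage
    (MeasurableSet.univ_pi fun i => measurableSet_Ioo).nullMeasurableSet]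
  rw [volume_pi_pi]
  simp only [Real.volume_Ioo]
  have : ∀ i : Fin n, z i + l / 2 - (z i - l / 2) = l := fun i => by ring
  simp_rw [this]
  rw [Finset.prod_const, ENNReal.ofReal_pow hl.le]
  simp

/-- The volume of the unit ball in `ℝⁿ`. -/
def vb (n : ℕ) : ℝ := Real.sqrt Real.pi ^ n / Real.Gamma ((n : ℝ) / 2 + 1)

lemma vb_pos (n : ℕ) : 0 < vb n :=
  div_pos (pow_pos (Real.sqrt_pos.2 Real.pi_pos) n) (Real.Gamma_pos_of_pos (by positivity))

/-- The constant in the lower bound for the Hausdorff content of a cube. -/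
def lc (n : ℕ) (β : ℝ) : ℝ :=
  min (om β / 2 ^ β) (om β * 2 ^ ((n : ℝ) - β) / vb n)

lemma lc_pos {n : ℕ} {β : ℝ} (hβ : 0 ≤ β) : 0 < lc n β := by
  apply lt_min
  · exact div_pos (om_pos hβ) (Real.rpow_pos_of_pos (by norm_num) β)
  · exact div_pos (mul_pos (om_pos hβ) (Real.rpow_pos_of_pos (by norm_num) _)) (vb_pos n)

lemma hContent_cube_lower {n : ℕ} (hn : 0 < n) {β : ℝ} (hβ0 : 0 < β) (hβn : β ≤ n)
    (z : Rn n) {l : ℝ} (hl : 0 < l) :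
    ENNReal.ofReal (lc n β * l ^ β) ≤ hContent n β (cube n z l) := by
  haveI : Nonempty (Fin n) := Fin.pos_iff_nonempty.1 hn
  have hom := om_pos hβ0.le
  have hvb := vb_pos n
  have hlβ : (0:ℝ) < l ^ β := Real.rpow_pos_of_pos hl β
  rw [hContent]
  refine le_iInf fun c => le_iInf fun r => le_iInf fun hcov => ?_
  have hsummand : ∀ i : ℕ, Real.pi ^ (β / 2) / Real.Gamma (β / 2 + 1) * ((r i : ℝ)) ^ β
      = om β * (r i : ℝ) ^ β := fun i => rfl
  simp_rw [hsummand]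
  by_cases hbig : ∃ i, l / 2 ≤ (r i : ℝ)
  · obtain ⟨i, hi⟩ := hbig
    refine le_trans ?_ (ENNReal.le_tsum i)
    apply ENNReal.ofReal_le_ofReal
    have h1 : (l/2) ^ β ≤ (r i : ℝ) ^ β := Real.rpow_le_rpow (by positivity) hi hβ0.le
    have h2 : (l/2) ^ β = l ^ β / 2 ^ β := Real.div_rpow hl.le (by norm_num : (0:ℝ) ≤ 2) β
    have h3 : lc n β ≤ om β / 2 ^ β := min_le_left _ _
    have h4 : (0:ℝ) < (2:ℝ) ^ β := Real.rpow_pos_of_pos (by norm_num) β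
    calc lc n β * l ^ β ≤ om β / 2^β * l^β := by nlinarith
      _ = om β * ((l/2)^β) := by rw [h2]; ring
      _ ≤ om β * (r i:ℝ)^β := by nlinarith
  · push_neg at hbig
    set A : ℝ := vb n * (l/2) ^ ((n:ℝ) - β) / om β with hA
    have hl2 : (0:ℝ) < (l/2) ^ ((n:ℝ) - β) := Real.rpow_pos_of_pos (by positivity) _
    have hApos : 0 < A := by positivity
    have hterm : ∀ i, volume (Metric.ball (c i) ((r i : ℝ))) ≤
        ENNReal.ofReal A * ENNReal.ofReal (om β * (r i : ℝ) ^ β) := by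
      intro i
      rw [EuclideanSpace.volume_ball, ← ENNReal.ofReal_mul (by positivity)]
      have hcard : Fintype.card (Fin n) = n := Fintype.card_fin n
      rw [hcard, ← ENNReal.ofReal_pow (r i).coe_nonneg, ← ENNReal.ofReal_mul (by positivity)]
      apply ENNReal.ofReal_le_ofReal
      have hrn : (0:ℝ) ≤ (r i : ℝ) := (r i).coe_nonneg
      rcases eq_or_lt_of_le hrn with h0 | h0
      · rw [← h0]
        rw [zero_pow hn.ne', Real.zero_rpow hβ0.ne']
        simp
      · have e1 : (r i : ℝ) ^ n = (r i : ℝ) ^ β * (r i : ℝ) ^ ((n:ℝ) - β) := by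
          rw [← Real.rpow_natCast _ n, ← Real.rpow_add h0]; ring_nf
        have e2 : (r i : ℝ) ^ ((n:ℝ) - β) ≤ (l/2) ^ ((n:ℝ) - β) :=
          Real.rpow_le_rpow hrn (hbig i).le (by linarith)
        have e3 : (0:ℝ) < (r i : ℝ) ^ β := Real.rpow_pos_of_pos h0 β
        calc (r i : ℝ) ^ n * vb n = vb n * ((r i:ℝ)^β * (r i:ℝ)^((n:ℝ)-β)) := by rw [e1]; ring
          _ ≤ vb n * ((r i:ℝ)^β * (l/2)^((n:ℝ)-β)) := by gcongr
          _ = A * (om β * (r i:ℝ)^β) := by rw [hA]; field_simp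
    have hvol : ENNReal.ofReal (l ^ n) ≤
        ENNReal.ofReal A * ∑' i, ENNReal.ofReal (om β * (r i : ℝ) ^ β) := by
      rw [← volume_cube z hl, ← ENNReal.tsum_mul_left]
      exact ((measure_mono hcov).trans (measure_iUnion_le _)).trans (ENNReal.tsum_le_tsum hterm)
    have hdiv : ENNReal.ofReal (l ^ n) / ENNReal.ofReal A ≤
        ∑' i, ENNReal.ofReal (om β * (r i : ℝ) ^ β) := by
      rw [ENNReal.div_le_iff_le_mul (Or.inl (by simp [hApos])) (Or.inl ENNReal.ofReal_ne_top)]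
      rwa [mul_comm]
    refine le_trans ?_ hdiv
    rw [← ENNReal.ofReal_div_of_pos hApos]
    apply ENNReal.ofReal_le_ofReal
    have e4 : (l:ℝ) ^ n = l ^ β * l ^ ((n:ℝ) - β) := by
      rw [← Real.rpow_natCast _ n, ← Real.rpow_add hl]; ring_nf
    have e5 : (l/2) ^ ((n:ℝ) - β) = l ^ ((n:ℝ)-β) / 2 ^ ((n:ℝ)-β) :=
      Real.div_rpow hl.le (by norm_num : (0:ℝ) ≤ 2) ((n:ℝ)-β)
    have h2p : (0:ℝ) < (2:ℝ) ^ ((n:ℝ)-β) := Real.rpow_pos_of_pos (by norm_num) _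
    have hlnβ : (0:ℝ) < l ^ ((n:ℝ)-β) := Real.rpow_pos_of_pos hl _
    have e6 : l ^ n / A = om β * 2 ^ ((n:ℝ)-β) / vb n * l ^ β := by
      rw [e4, hA, e5]
      field_simp
    rw [e6]
    exact mul_le_mul_of_nonneg_right (min_le_right _ _) hlβ.le

lemma hContent_compare {n : ℕ} {β₁ β₂ : ℝ} (h1 : 0 < β₁) (h12 : β₁ ≤ β₂)
    {E : Set (Rn n)} {x : Rn n} {R : ℝ} (hR : 0 < R) (hE : E ⊆ Metric.ball x R) :
    hContent n β₂ E ≤ ENNReal.ofReal (om β₂ / om β₁ * R ^ (β₂ - β₁)) * hContent n β₁ E := by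
  have h2 : (0:ℝ) < β₂ := lt_of_lt_of_le h1 h12
  have hom1 := om_pos h1.le
  have hom2 := om_pos h2.le
  have hRp : (0:ℝ) < R ^ (β₂ - β₁) := Real.rpow_pos_of_pos hR _
  set K : ℝ := om β₂ / om β₁ * R ^ (β₂ - β₁) with hKdef
  have hKpos : 0 < K := by positivity
  have key : ∀ (c : ℕ → Rn n) (r : ℕ → NNReal), (E ⊆ ⋃ i, Metric.ball (c i) (r i)) →
      hContent n β₂ E ≤ ENNReal.ofReal K * ∑' i, ENNReal.ofReal (om β₁ * (r i : ℝ) ^ β₁) := by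
    intro c r hcov
    by_cases hsmall : ∀ i, (r i : ℝ) ≤ R
    · refine (hContent_le n β₂ E c r hcov).trans ?_
      rw [← ENNReal.tsum_mul_left]
      refine ENNReal.tsum_le_tsum fun i => ?_
      rw [← ENNReal.ofReal_mul hKpos.le]
      apply ENNReal.ofReal_le_ofReal
      have hrn : (0:ℝ) ≤ (r i : ℝ) := (r i).coe_nonneg
      rcases eq_or_lt_of_le hrn with h0 | h0
      · rw [← h0, Real.zero_rpow h2.ne', Real.zero_rpow h1.ne']
        simp
      · have e1 : (r i : ℝ) ^ β₂ = (r i : ℝ) ^ β₁ * (r i : ℝ) ^ (β₂ - β₁) := by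
          rw [← Real.rpow_add h0]; ring_nf
        have e2 : (r i : ℝ) ^ (β₂ - β₁) ≤ R ^ (β₂ - β₁) :=
          Real.rpow_le_rpow hrn (hsmall i) (by linarith)
        have e3 : (0:ℝ) < (r i : ℝ) ^ β₁ := Real.rpow_pos_of_pos h0 _
        calc om β₂ * (r i:ℝ) ^ β₂ = om β₂ * ((r i:ℝ)^β₁ * (r i:ℝ)^(β₂-β₁)) := by rw [e1]
          _ ≤ om β₂ * ((r i:ℝ)^β₁ * R^(β₂-β₁)) := by gcongr
          _ = K * (om β₁ * (r i:ℝ)^β₁) := by rw [hKdef]; field_simp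
    · push_neg at hsmall
      obtain ⟨i, hi⟩ := hsmall
      have hb : hContent n β₂ E ≤ ENNReal.ofReal (om β₂ * R ^ β₂) := hContent_le_ball h2 hR.le hE
      refine hb.trans ?_
      have step : ENNReal.ofReal (K * (om β₁ * (R:ℝ) ^ β₁)) ≤
          ENNReal.ofReal K * ∑' j, ENNReal.ofReal (om β₁ * (r j : ℝ) ^ β₁) := by
        rw [ENNReal.ofReal_mul hKpos.le]
        refine mul_le_mul_right ?_ _
        refine le_trans ?_ (ENNReal.le_tsum i)
        apply ENNReal.ofReal_le_ofReal
        have : R ^ β₁ ≤ (r i : ℝ) ^ β₁ := Real.rpow_le_rpow hR.le hi.le h1.le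
        nlinarith
      refine le_trans ?_ step
      apply ENNReal.ofReal_le_ofReal
      have e4 : R ^ (β₂ - β₁) * R ^ β₁ = R ^ β₂ := by
        rw [← Real.rpow_add hR]; ring_nf
      calc om β₂ * R ^ β₂ = om β₂ / om β₁ * R^(β₂-β₁) * (om β₁ * R^β₁) := by
            rw [← e4]; field_simp
        _ ≤ K * (om β₁ * R ^ β₁) := le_of_eq (by rw [hKdef])
  rw [mul_comm, ← ENNReal.div_le_iff_le_mul (Or.inl (by simp [hKpos]))
    (Or.inl ENNReal.ofReal_ne_top), hContent]
  refine le_iInf fun c => le_iInf fun r => le_iInf fun hcov => ?_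
  rw [ENNReal.div_le_iff_le_mul (Or.inl (by simp [hKpos])) (Or.inl ENNReal.ofReal_ne_top), mul_comm]
  exact key c r hcov

lemma main_ineq (n : ℕ) (β₁ β₂ : ℝ) (h1 : 0 < β₁) (h12 : β₁ ≤ β₂) (h2 : β₂ ≤ n) :
    ∃ C : ℝ, 0 < C ∧ ∀ (z : Rn n) (l : ℝ), 0 < l → ∀ E, E ⊆ cube n z l →
      hContent n β₂ E ≤
        ENNReal.ofReal C * hContent n β₁ (cube n z l) ^ (β₂ / β₁ - 1) * hContent n β₁ E := by
  have hβ2 : (0:ℝ) < β₂ := lt_of_lt_of_le h1 h12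
  have hn : 0 < n := by
    by_contra h
    push_neg at h
    interval_cases n
    · simp at h2; linarith
  have hs : (0:ℝ) < Real.sqrt n := Real.sqrt_pos.2 (by exact_mod_cast hn)
  have hlc := lc_pos (n := n) h1.le
  have hom1 := om_pos h1.le
  have hom2 := om_pos hβ2.le
  set e : ℝ := β₂ / β₁ - 1 with he
  have he0 : 0 ≤ e := by
    rw [he, sub_nonneg, le_div_iff₀ h1]
    linarith
  have hlce : (0:ℝ) < lc n β₁ ^ e := Real.rpow_pos_of_pos hlc _
  refine ⟨om β₂ / om β₁ * Real.sqrt n ^ (β₂ - β₁) / lc n β₁ ^ e, by positivity, ?_⟩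
  set C : ℝ := om β₂ / om β₁ * Real.sqrt n ^ (β₂ - β₁) / lc n β₁ ^ e with hC
  intro z l hl E hE
  have hR : (0:ℝ) < l * Real.sqrt n := by positivity
  have step1 := hContent_compare h1 h12 hR (hE.trans (cube_subset_ball hn z hl))
  refine step1.trans (mul_le_mul_left ?_ _)
  -- show the constant bound
  have hH := hContent_cube_lower hn h1 (le_trans h12 h2) z hl
  have hm : (0:ℝ) < lc n β₁ * l ^ β₁ :=
    mul_pos hlc (Real.rpow_pos_of_pos hl _)
  have hHe : ENNReal.ofReal ((lc n β₁ * l ^ β₁) ^ e) ≤ hContent n β₁ (cube n z l) ^ e := by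
    rw [← ENNReal.ofReal_rpow_of_pos hm]
    exact ENNReal.rpow_le_rpow hH he0
  calc ENNReal.ofReal (om β₂ / om β₁ * (l * Real.sqrt n) ^ (β₂ - β₁))
      = ENNReal.ofReal (C * (lc n β₁ * l ^ β₁) ^ e) := by
        congr 1
        have d1 : (lc n β₁ * l ^ β₁) ^ e = lc n β₁ ^ e * l ^ (β₁ * e) := by
          rw [Real.mul_rpow hlc.le (Real.rpow_pos_of_pos hl _).le, Real.rpow_mul hl.le]
        have d2 : β₁ * e = β₂ - β₁ := by
          rw [he]; field_simp
        have d3 : (l * Real.sqrt n) ^ (β₂ - β₁) = l ^ (β₂ - β₁) * Real.sqrt n ^ (β₂ - β₁) :=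
          Real.mul_rpow hl.le hs.le
        rw [d1, d2, d3, hC]
        field_simp
    _ = ENNReal.ofReal C * ENNReal.ofReal ((lc n β₁ * l ^ β₁) ^ e) := by
        rw [ENNReal.ofReal_mul (by positivity)]
    _ ≤ ENNReal.ofReal C * hContent n β₁ (cube n z l) ^ e := mul_le_mul_right hHe _

lemma hContent_cube_ne_top {n : ℕ} (hn : 0 < n) {β : ℝ} (hβ : 0 < β) (z : Rn n) {l : ℝ}
    (hl : 0 < l) : hContent n β (cube n z l) ≠ ∞ := by
  have hR : (0:ℝ) ≤ l * Real.sqrt n := by positivity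
  exact ((hContent_le_ball hβ hR (cube_subset_ball hn z hl)).trans_lt ENNReal.ofReal_lt_top).ne

/-- Quasicontinuity passes from `H^{β₁}_∞` to `H^{β₂}_∞` for `β₁ ≤ β₂`; in fact the Choquet
integral w.r.t. `H^{β₂}_∞` is controlled by the one w.r.t. `H^{β₁}_∞` with a constant
`C = C(β₁, β₂)`. -/
theorem stmt10 (n : ℕ) (β₁ β₂ : ℝ) (h1 : 0 < β₁) (h12 : β₁ ≤ β₂) (h2 : β₂ ≤ n) :
    (∃ C : ℝ, 0 < C ∧ ∀ (z : Rn n) (l : ℝ), 0 < l → ∀ g : Rn n → ℝ, (∀ x, 0 ≤ g x) →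
      choquet n β₂ (cube n z l) g ≤
        ENNReal.ofReal C * hContent n β₁ (cube n z l) ^ (β₂ / β₁ - 1) *
          choquet n β₁ (cube n z l) g) ∧
    ∀ (z : Rn n) (l : ℝ), 0 < l → ∀ (f : Rn n → ℝ) (φ : ℕ → Rn n → ℝ),
      (∀ j, ContinuousOn (φ j) (cube n z l)) →
      (∀ j, ∃ B : ℝ, ∀ x ∈ cube n z l, |φ j x| ≤ B) →
      Tendsto (fun j => choquet n β₁ (cube n z l) (fun x => |f x - φ j x|)) atTop (nhds 0) →
      Tendsto (fun j => choquet n β₂ (cube n z l) (fun x => |f x - φ j x|)) atTop (nhds 0) := by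
  have hn : 0 < n := by
    by_contra h
    push_neg at h
    interval_cases n
    · simp at h2; linarith
  obtain ⟨C, hC, hmain⟩ := main_ineq n β₁ β₂ h1 h12 h2
  have hKne : ∀ (z : Rn n) (l : ℝ), 0 < l →
      (ENNReal.ofReal C * hContent n β₁ (cube n z l) ^ (β₂ / β₁ - 1)) ≠ ∞ := by
    intro z l hl
    exact ENNReal.mul_ne_top ENNReal.ofReal_ne_top
      (ENNReal.rpow_ne_top_of_nonneg
        (by rw [sub_nonneg, le_div_iff₀ h1]; linarith)
        (hContent_cube_ne_top hn h1 z hl))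
  have hchoq : ∀ (z : Rn n) (l : ℝ), 0 < l → ∀ g : Rn n → ℝ, (∀ x, 0 ≤ g x) →
      choquet n β₂ (cube n z l) g ≤
        ENNReal.ofReal C * hContent n β₁ (cube n z l) ^ (β₂ / β₁ - 1) *
          choquet n β₁ (cube n z l) g := by
    intro z l hl g _
    set K : ℝ≥0∞ := ENNReal.ofReal C * hContent n β₁ (cube n z l) ^ (β₂ / β₁ - 1) with hK
    calc choquet n β₂ (cube n z l) g
        ≤ ∫⁻ t in Set.Ioi (0:ℝ), K * hContent n β₁ {x | x ∈ cube n z l ∧ t < g x} := by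
          refine lintegral_mono fun t => ?_
          exact hmain z l hl _ (fun x hx => hx.1)
      _ = K * choquet n β₁ (cube n z l) g := lintegral_const_mul' K _ (hKne z l hl)
  refine ⟨⟨C, hC, hchoq⟩, ?_⟩
  intro z l hl f φ _ _ htend
  set K : ℝ≥0∞ := ENNReal.ofReal C * hContent n β₁ (cube n z l) ^ (β₂ / β₁ - 1) with hK
  have hb : ∀ j, choquet n β₂ (cube n z l) (fun x => |f x - φ j x|) ≤
      K * choquet n β₁ (cube n z l) (fun x => |f x - φ j x|) :=
    fun j => hchoq z l hl _ (fun x => abs_nonneg _)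
  have h0 : Tendsto (fun j => K * choquet n β₁ (cube n z l) (fun x => |f x - φ j x|))
      atTop (nhds 0) := by
    have := ENNReal.Tendsto.const_mul htend (Or.inr (hKne z l hl))
    simpa using this
  exact tendsto_of_tendsto_of_tendsto_of_le_of_le tendsto_const_nhds h0 (fun j => zero_le) hb

end
end

section
/- Let n ∈ ℕ, 0 < α < n, 0 < ε ≤ α, let Q ⊆ ℝⁿ be an open cube with center x₀, and let φ ∈ L¹(ℝⁿ) with supp φ ⊆ 2Q (the cube with the same center and twice the side length). Then there exist constants C' and C'' depending only on n, α, ε such that for every locally finite Borel measure μ on ℝⁿ with ‖μ‖_{M^{n−α+ε}} ≤ 1 one has ∫_Q |I_α φ| dμ ≤ C' ℓ(Q)^ε ‖φ‖_{L¹(ℝⁿ)} ≤ C'' ℓ(Q)^{n−α+ε} M_α φ(x₀). -/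
open MeasureTheory Filter Set Metric ENNReal

noncomputable section

lemma measurableSet_cube (n : ℕ) (z : Rn n) (l : ℝ) : MeasurableSet (cube n z l) := by
  have : cube n z l = ⋂ i, {x : Rn n | |x i - z i| < l / 2} := by
    ext x; simp [cube, Set.mem_iInter]
  rw [this]
  exact MeasurableSet.iInter fun i => by
    have : Measurable fun x : Rn n => |x i - z i| := by measurability
    exact measurableSet_lt this measurable_const

lemma norm_le_of_mem_cube {n : ℕ} {z : Rn n} {L : ℝ} (hL : 0 ≤ L) {x : Rn n}
    (hx : x ∈ cube n z L) : ‖x - z‖ ≤ (n : ℝ) * (L / 2) := by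
  have h1 : ‖x - z‖ = Real.sqrt (∑ i, ‖(x - z) i‖ ^ 2) := EuclideanSpace.norm_eq _
  have h2 : (∑ i, ‖(x - z) i‖ ^ 2) ≤ ((n : ℝ) * (L / 2)) ^ 2 := by
    have hsum : (∑ i, ‖(x - z) i‖ ^ 2) ≤ ∑ _i : Fin n, (L / 2) ^ 2 := by
      apply Finset.sum_le_sum
      intro i _
      have hxi : |x i - z i| ≤ L / 2 := (hx i).le
      have : ‖(x - z) i‖ = |x i - z i| := by simp [Real.norm_eq_abs]
      rw [this]
      exact pow_le_pow_left₀ (abs_nonneg _) hxi 2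
    refine hsum.trans ?_
    rw [Finset.sum_const, Finset.card_univ, Fintype.card_fin, nsmul_eq_mul]
    have hn2 : (n : ℝ) ≤ (n : ℝ) ^ 2 := by
      rcases Nat.eq_zero_or_pos n with h | h
      · simp [h]
      · have h1n : (1 : ℝ) ≤ (n : ℝ) := by exact_mod_cast h
        nlinarith
    have : (0:ℝ) ≤ (L/2)^2 := sq_nonneg _
    nlinarith
  rw [h1]
  calc Real.sqrt (∑ i, ‖(x - z) i‖ ^ 2) ≤ Real.sqrt (((n : ℝ) * (L / 2)) ^ 2) :=
        Real.sqrt_le_sqrt h2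
    _ = (n : ℝ) * (L / 2) := Real.sqrt_sq (by positivity)

lemma kernel_bound (n : ℕ) (α ε : ℝ) (hα0 : 0 < α) (hαn : α < n) (hε0 : 0 < ε)
    (μ : Measure (Rn n))
    (hμ : ∀ (x : Rn n) (r : ℝ), 0 < r →
      μ (Metric.ball x r) ≤ ENNReal.ofReal (r ^ ((n : ℝ) - α + ε)))
    (x₀ : Rn n) (l : ℝ) (hl : 0 < l) (y : Rn n) :
    ∫⁻ x in cube n x₀ l, ENNReal.ofReal (‖x - y‖ ^ (α - (n : ℝ))) ∂μ
      ≤ ENNReal.ofReal ((1 + 2 ^ ((n : ℝ) - α) * (1 - 2 ^ (-ε))⁻¹) * (((n : ℝ) + 1) * l) ^ ε) := by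
  classical
  set D : ℝ := ((n : ℝ) + 1) * l with hDdef
  have hD : 0 < D := by positivity
  set g : Rn n → ℝ≥0∞ := fun x => ENNReal.ofReal (‖x - y‖ ^ (α - (n : ℝ))) with hgdef
  set q : ℝ := 2 ^ (-ε) with hqdef
  have hq0 : 0 < q := Real.rpow_pos_of_pos two_pos _
  have hq1 : q < 1 := Real.rpow_lt_one_of_one_lt_of_neg one_lt_two (by linarith)
  have hexp_ne : α - (n : ℝ) ≠ 0 := by intro h; nlinarith [h]
  set r : ℕ → ℝ := fun k => D / 2 ^ k with hrdef
  have hr : ∀ k, 0 < r k := fun k => by positivity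
  set S : Set (Rn n) := cube n x₀ l \ ball y D with hSdef
  set T : ℕ → Set (Rn n) := fun k => ball y (r k) \ ball y (r (k + 1)) with hTdef
  -- covering
  have hcover : cube n x₀ l ⊆ ({y} ∪ S) ∪ ⋃ k, T k := by
    intro x hx
    by_cases hxy : x = y
    · exact Or.inl (Or.inl hxy)
    by_cases hball : x ∈ ball y D
    · right
      have hdpos : 0 < dist x y := dist_pos.2 hxy
      have hdlt : dist x y < D := mem_ball.1 hball
      have hne : ∃ k, r k ≤ dist x y := by
        obtain ⟨k, hk⟩ := exists_pow_lt_of_lt_one (div_pos hdpos hD) (by norm_num : (1:ℝ)/2 < 1)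
        refine ⟨k, ?_⟩
        have : ((1:ℝ)/2) ^ k = 1 / 2 ^ k := by rw [div_pow, one_pow]
        rw [this] at hk
        rw [hrdef]
        have h2k : (0:ℝ) < 2 ^ k := by positivity
        calc D / 2 ^ k = D * (1 / 2 ^ k) := by ring
          _ ≤ D * (dist x y / D) := by nlinarith
          _ = dist x y := by field_simp
      let k₀ := Nat.find hne
      have h1 : r k₀ ≤ dist x y := Nat.find_spec hne
      have hk₀ : k₀ ≠ 0 := by
        intro h
        have : r 0 ≤ dist x y := h ▸ h1
        simp only [hrdef, pow_zero, div_one] at this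
        linarith
      obtain ⟨m, hm⟩ := Nat.exists_eq_succ_of_ne_zero hk₀
      have h2 : ¬ (r m ≤ dist x y) := Nat.find_min hne (by omega)
      refine Set.mem_iUnion.2 ⟨m, ?_, ?_⟩
      · exact mem_ball.2 (lt_of_not_ge h2)
      · intro hmem
        have h3 := mem_ball.1 hmem
        rw [Nat.succ_eq_add_one] at hm
        have h1' : r (m + 1) ≤ dist x y := by rw [← hm]; exact h1
        linarith
    · exact Or.inl (Or.inr ⟨hx, hball⟩)
  have hQball : cube n x₀ l ⊆ ball x₀ D := by
    intro x hx
    have := norm_le_of_mem_cube hl.le hx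
    have hd : dist x x₀ = ‖x - x₀‖ := dist_eq_norm _ _
    rw [mem_ball, hd]
    have : (n : ℝ) * (l / 2) < D := by rw [hDdef]; nlinarith [Nat.cast_nonneg (α := ℝ) n]
    linarith [norm_le_of_mem_cube hl.le hx]
  -- singleton piece
  have piece1 : ∫⁻ x in ({y} : Set (Rn n)), g x ∂μ = 0 := by
    rw [lintegral_singleton]
    have : g y = 0 := by
      simp only [hgdef, sub_self, norm_zero, Real.zero_rpow hexp_ne, ENNReal.ofReal_zero]
    rw [this, zero_mul]
  -- S piece
  have piece2 : ∫⁻ x in S, g x ∂μ ≤ ENNReal.ofReal (D ^ ε) := by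
    have hSm : MeasurableSet S := (measurableSet_cube n x₀ l).diff measurableSet_ball
    have hgb : ∀ x ∈ S, g x ≤ ENNReal.ofReal (D ^ (α - (n : ℝ))) := by
      intro x hx
      apply ENNReal.ofReal_le_ofReal
      have hdist : D ≤ ‖x - y‖ := by
        have := hx.2
        rw [mem_ball, dist_eq_norm] at this
        linarith [not_lt.1 this]
      exact Real.rpow_le_rpow_of_nonpos hD hdist (by linarith)
    calc ∫⁻ x in S, g x ∂μ ≤ ∫⁻ _x in S, ENNReal.ofReal (D ^ (α - (n : ℝ))) ∂μ :=
          setLIntegral_mono' hSm hgb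
      _ = ENNReal.ofReal (D ^ (α - (n : ℝ))) * μ S := setLIntegral_const _ _
      _ ≤ ENNReal.ofReal (D ^ (α - (n : ℝ))) * ENNReal.ofReal (D ^ ((n : ℝ) - α + ε)) := by
          apply mul_le_mul_right
          exact le_trans (measure_mono (fun z hz => hQball hz.1)) (hμ x₀ D hD)
      _ = ENNReal.ofReal (D ^ ε) := by
          rw [← ENNReal.ofReal_mul (Real.rpow_nonneg hD.le _), ← Real.rpow_add hD,
            show α - (n:ℝ) + ((n:ℝ) - α + ε) = ε by ring]
  -- T pieces
  have piece3 : ∀ k, ∫⁻ x in T k, g x ∂μ ≤ ENNReal.ofReal (2 ^ ((n:ℝ) - α) * D ^ ε * q ^ k) := by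
    intro k
    have hTm : MeasurableSet (T k) := measurableSet_ball.diff measurableSet_ball
    have hgb : ∀ x ∈ T k, g x ≤ ENNReal.ofReal ((r (k+1)) ^ (α - (n : ℝ))) := by
      intro x hx
      apply ENNReal.ofReal_le_ofReal
      have hdist : r (k+1) ≤ ‖x - y‖ := by
        have := hx.2
        rw [mem_ball, dist_eq_norm] at this
        linarith [not_lt.1 this]
      exact Real.rpow_le_rpow_of_nonpos (hr _) hdist (by linarith)
    have key : (r (k+1)) ^ (α - (n:ℝ)) * (r k) ^ ((n:ℝ) - α + ε)
        = 2 ^ ((n:ℝ) - α) * D ^ ε * q ^ k := by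
      have h2 : (0:ℝ) < 2 := two_pos
      have hrk : ∀ j : ℕ, r j = D * (2:ℝ) ^ (-(j:ℝ)) := by
        intro j
        show D / 2 ^ j = _
        rw [Real.rpow_neg h2.le, Real.rpow_natCast, div_eq_mul_inv]
      have e1 : ∀ a b : ℝ, ((2:ℝ) ^ a) ^ b = 2 ^ (a * b) :=
        fun a b => (Real.rpow_mul h2.le a b).symm
      rw [hrk, hrk,
        Real.mul_rpow hD.le (Real.rpow_nonneg h2.le _),
        Real.mul_rpow hD.le (Real.rpow_nonneg h2.le _), e1, e1,
        hqdef, ← Real.rpow_natCast ((2:ℝ) ^ (-ε)) k, e1]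
      rw [mul_mul_mul_comm, ← Real.rpow_add hD, ← Real.rpow_add h2]
      rw [show (α - (n:ℝ)) + ((n:ℝ) - α + ε) = ε by ring]
      rw [show (-(((k+1 : ℕ)):ℝ)) * (α - (n:ℝ)) + (-(k:ℝ)) * ((n:ℝ) - α + ε)
            = ((n:ℝ) - α) + (-ε * (k:ℝ)) by push_cast; ring]
      rw [Real.rpow_add h2]
      push_cast
      ring
    calc ∫⁻ x in T k, g x ∂μ
        ≤ ∫⁻ _x in T k, ENNReal.ofReal ((r (k+1)) ^ (α - (n : ℝ))) ∂μ :=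
          setLIntegral_mono' hTm hgb
      _ = ENNReal.ofReal ((r (k+1)) ^ (α - (n : ℝ))) * μ (T k) := setLIntegral_const _ _
      _ ≤ ENNReal.ofReal ((r (k+1)) ^ (α - (n : ℝ)))
            * ENNReal.ofReal ((r k) ^ ((n:ℝ) - α + ε)) := by
          apply mul_le_mul_right
          exact le_trans (measure_mono Set.diff_subset) (hμ y (r k) (hr k))
      _ = ENNReal.ofReal (2 ^ ((n:ℝ) - α) * D ^ ε * q ^ k) := by
          rw [← ENNReal.ofReal_mul (Real.rpow_nonneg (hr _).le _), key]
  -- sum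
  have hsum : ∑' k, ∫⁻ x in T k, g x ∂μ
      ≤ ENNReal.ofReal (2 ^ ((n:ℝ) - α) * D ^ ε * (1 - q)⁻¹) := by
    have hA : (0:ℝ) ≤ 2 ^ ((n:ℝ) - α) * D ^ ε := by positivity
    calc ∑' k, ∫⁻ x in T k, g x ∂μ
        ≤ ∑' k, ENNReal.ofReal (2 ^ ((n:ℝ) - α) * D ^ ε * q ^ k) :=
          ENNReal.tsum_le_tsum piece3
      _ = ENNReal.ofReal (2 ^ ((n:ℝ) - α) * D ^ ε) * ∑' k, (ENNReal.ofReal q) ^ k := by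
          simp_rw [ENNReal.ofReal_mul hA, ENNReal.ofReal_pow hq0.le]
          rw [ENNReal.tsum_mul_left]
      _ = ENNReal.ofReal (2 ^ ((n:ℝ) - α) * D ^ ε) * (1 - ENNReal.ofReal q)⁻¹ := by
          rw [ENNReal.tsum_geometric]
      _ = ENNReal.ofReal (2 ^ ((n:ℝ) - α) * D ^ ε * (1 - q)⁻¹) := by
          rw [ENNReal.ofReal_mul hA]
          congr 1
          rw [ENNReal.ofReal_inv_of_pos (by linarith), ENNReal.ofReal_sub _ hq0.le,
            ENNReal.ofReal_one]
  -- put together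
  calc ∫⁻ x in cube n x₀ l, g x ∂μ
      ≤ ∫⁻ x in ({y} ∪ S) ∪ ⋃ k, T k, g x ∂μ := lintegral_mono_set hcover
    _ ≤ (∫⁻ x in ({y} ∪ S : Set (Rn n)), g x ∂μ) + ∫⁻ x in ⋃ k, T k, g x ∂μ :=
        lintegral_union_le _ _ _
    _ ≤ ((∫⁻ x in ({y} : Set (Rn n)), g x ∂μ) + ∫⁻ x in S, g x ∂μ)
          + ∑' k, ∫⁻ x in T k, g x ∂μ :=
        add_le_add (lintegral_union_le _ _ _) (lintegral_iUnion_le _ _)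
    _ ≤ (0 + ENNReal.ofReal (D ^ ε)) + ENNReal.ofReal (2 ^ ((n:ℝ) - α) * D ^ ε * (1 - q)⁻¹) := by
        exact add_le_add (add_le_add piece1.le piece2) hsum
    _ = ENNReal.ofReal ((1 + 2 ^ ((n : ℝ) - α) * (1 - 2 ^ (-ε))⁻¹) * D ^ ε) := by
        rw [zero_add, ← ENNReal.ofReal_add (Real.rpow_nonneg hD.le _) (mul_nonneg (by positivity) (inv_nonneg.2 (by linarith)))]
        congr 1
        rw [← hqdef]
        ring
    _ = ENNReal.ofReal ((1 + 2 ^ ((n : ℝ) - α) * (1 - 2 ^ (-ε))⁻¹) * (((n : ℝ) + 1) * l) ^ ε) := by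
        rw [hDdef]

lemma ofReal_abs_integral_le {X : Type*} [MeasurableSpace X] (ν : Measure X) (f : X → ℝ) :
    ENNReal.ofReal |∫ y, f y ∂ν| ≤ ∫⁻ y, ENNReal.ofReal |f y| ∂ν := by
  by_cases hf : Integrable f ν
  · calc ENNReal.ofReal |∫ y, f y ∂ν| ≤ ENNReal.ofReal (∫ y, |f y| ∂ν) :=
        ENNReal.ofReal_le_ofReal (by simpa [Real.norm_eq_abs] using norm_integral_le_integral_norm (μ := ν) f)
    _ = ∫⁻ y, ENNReal.ofReal |f y| ∂ν :=
        ofReal_integral_eq_lintegral_ofReal hf.abs (ae_of_all _ fun _ => abs_nonneg _)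
  · simp [integral_undef hf]

lemma abs_div_rpow (n : ℕ) (α : ℝ) (hα0 : 0 < α) (hαn : α < n) (a t : ℝ) (ht : 0 ≤ t) :
    |a / t ^ ((n : ℝ) - α)| = |a| * t ^ (α - (n : ℝ)) := by
  rcases ht.eq_or_lt with h0 | h0
  · rw [← h0, Real.zero_rpow (by intro h; nlinarith), Real.zero_rpow (by intro h; nlinarith)]
    simp
  · rw [abs_div, abs_of_nonneg (Real.rpow_nonneg ht _),
      show α - (n : ℝ) = -((n : ℝ) - α) by ring, Real.rpow_neg ht, div_eq_mul_inv]


/-- For `φ ∈ L¹(ℝⁿ)` supported in `2Q`, and any locally finite Borel measure `μ` with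
`‖μ‖_{M^{n-α+ε}} ≤ 1`: `∫_Q |I_α φ| dμ ≤ C' ℓ(Q)^ε ‖φ‖_{L¹} ≤ C'' ℓ(Q)^{n-α+ε} M_α φ(x₀)`. -/
theorem stmt11 (n : ℕ) (α ε : ℝ) (hα0 : 0 < α) (hαn : α < n) (hε0 : 0 < ε) (hεα : ε ≤ α) :
    ∃ C' : ℝ, 0 < C' ∧ ∃ C'' : ℝ, 0 < C'' ∧
      ∀ (x₀ : Rn n) (l : ℝ), 0 < l →
        ∀ φ : Rn n → ℝ, Integrable φ volume →
          Function.support φ ⊆ cube n x₀ (2 * l) →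
          ∀ μ : Measure (Rn n), IsLocallyFiniteMeasure μ →
            (∀ (x : Rn n) (r : ℝ), 0 < r →
              μ (Metric.ball x r) ≤ ENNReal.ofReal (r ^ ((n : ℝ) - α + ε))) →
            (∫⁻ x in cube n x₀ l, ENNReal.ofReal |riesz n α φ x| ∂μ)
                ≤ ENNReal.ofReal (C' * l ^ ε * ∫ y, |φ y|) ∧
              ENNReal.ofReal (C' * l ^ ε * ∫ y, |φ y|)
                ≤ ENNReal.ofReal (C'' * l ^ ((n : ℝ) - α + ε)) * fracMax n α φ x₀ := by
  have hn1 : (0:ℝ) < (n:ℝ) + 1 := by positivity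
  have hγ : 0 < rieszConst n α := by
    unfold rieszConst
    apply div_pos
    · exact mul_pos (mul_pos (Real.rpow_pos_of_pos Real.pi_pos _)
        (Real.rpow_pos_of_pos two_pos _)) (Real.Gamma_pos_of_pos (by linarith))
    · exact Real.Gamma_pos_of_pos (by linarith)
  have hq1 : (2:ℝ) ^ (-ε) < 1 := Real.rpow_lt_one_of_one_lt_of_neg one_lt_two (by linarith)
  have hq0 : (0:ℝ) < 2 ^ (-ε) := Real.rpow_pos_of_pos two_pos _
  set c₀ : ℝ := (1 + 2 ^ ((n : ℝ) - α) * (1 - 2 ^ (-ε))⁻¹) * ((n : ℝ) + 1) ^ ε with hc₀def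
  have hc₀ : 0 < c₀ := by
    apply mul_pos _ (Real.rpow_pos_of_pos hn1 _)
    have : (0:ℝ) < 2 ^ ((n : ℝ) - α) * (1 - 2 ^ (-ε))⁻¹ :=
      mul_pos (Real.rpow_pos_of_pos two_pos _) (inv_pos.2 (by linarith))
    linarith
  refine ⟨(rieszConst n α)⁻¹ * c₀, by positivity,
    (rieszConst n α)⁻¹ * c₀ * ((n:ℝ) + 1) ^ ((n:ℝ) - α), by positivity,
    fun x₀ l hl φ hφ hsupp μ hloc hμ => ?_⟩
  haveI := hloc
  set C' : ℝ := (rieszConst n α)⁻¹ * c₀ with hC'def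
  set C'' : ℝ := (rieszConst n α)⁻¹ * c₀ * ((n:ℝ) + 1) ^ ((n:ℝ) - α) with hC''def
  have hIabs : (0:ℝ) ≤ ∫ y, |φ y| := integral_nonneg fun y => abs_nonneg _
  -- measurable representative
  obtain ⟨ψ, hψm, hae⟩ : ∃ ψ : Rn n → ℝ, StronglyMeasurable ψ ∧ φ =ᵐ[volume] ψ :=
    ⟨hφ.1.mk φ, hφ.1.stronglyMeasurable_mk, hφ.1.ae_eq_mk⟩
  have hψint : Integrable ψ volume := hφ.congr hae
  have hint_eq : ∫ y, |φ y| = ∫ y, |ψ y| :=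
    integral_congr_ae (hae.mono fun y hy => by dsimp only; rw [hy])
  have hriesz_eq : ∀ x, riesz n α φ x = riesz n α ψ x := fun x => by
    unfold riesz
    congr 1
    exact integral_congr_ae (hae.mono fun y hy => by dsimp only; rw [hy])
  constructor
  · -- first inequality
    set F : Rn n → Rn n → ℝ≥0∞ :=
      fun x y => ENNReal.ofReal (|ψ y| * ‖x - y‖ ^ (α - (n:ℝ))) with hFdef
    have hFmeas : Measurable (Function.uncurry F) := by
      apply Measurable.ennreal_ofReal
      apply Measurable.mul
      · exact (hψm.measurable.comp measurable_snd).abs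
      · measurability
    have stepA : ∀ x, ENNReal.ofReal |riesz n α ψ x|
        ≤ ENNReal.ofReal (rieszConst n α)⁻¹ * ∫⁻ y, F x y ∂volume := by
      intro x
      have h1 : |riesz n α ψ x| = (rieszConst n α)⁻¹ * |∫ y, ψ y / ‖x - y‖ ^ ((n:ℝ) - α)| := by
        unfold riesz
        rw [abs_mul, abs_of_nonneg (inv_nonneg.2 hγ.le)]
      rw [h1, ENNReal.ofReal_mul (inv_nonneg.2 hγ.le)]
      apply mul_le_mul_right
      calc ENNReal.ofReal |∫ y, ψ y / ‖x - y‖ ^ ((n:ℝ) - α)|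
          ≤ ∫⁻ y, ENNReal.ofReal |ψ y / ‖x - y‖ ^ ((n:ℝ) - α)| ∂volume :=
            ofReal_abs_integral_le _ _
        _ = ∫⁻ y, F x y ∂volume := by
            apply lintegral_congr
            intro y
            rw [hFdef]
            congr 1
            exact abs_div_rpow n α hα0 hαn _ _ (norm_nonneg _)
    have kernel : ∀ y, ∫⁻ x in cube n x₀ l, ENNReal.ofReal (‖x - y‖ ^ (α - (n:ℝ))) ∂μ
        ≤ ENNReal.ofReal (c₀ * l ^ ε) := by
      intro y
      have := kernel_bound n α ε hα0 hαn hε0 μ hμ x₀ l hl y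
      refine this.trans (le_of_eq ?_)
      congr 1
      rw [hc₀def, Real.mul_rpow hn1.le hl.le]
      ring
    calc ∫⁻ x in cube n x₀ l, ENNReal.ofReal |riesz n α φ x| ∂μ
        = ∫⁻ x in cube n x₀ l, ENNReal.ofReal |riesz n α ψ x| ∂μ := by
          apply lintegral_congr; intro x; rw [hriesz_eq]
      _ ≤ ∫⁻ x in cube n x₀ l,
            (ENNReal.ofReal (rieszConst n α)⁻¹ * ∫⁻ y, F x y ∂volume) ∂μ :=
          lintegral_mono stepA
      _ = ENNReal.ofReal (rieszConst n α)⁻¹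
            * ∫⁻ x in cube n x₀ l, ∫⁻ y, F x y ∂volume ∂μ :=
          lintegral_const_mul' _ _ ENNReal.ofReal_ne_top
      _ = ENNReal.ofReal (rieszConst n α)⁻¹
            * ∫⁻ y, ∫⁻ x in cube n x₀ l, F x y ∂μ ∂volume := by
          rw [lintegral_lintegral_swap hFmeas.aemeasurable]
      _ ≤ ENNReal.ofReal (rieszConst n α)⁻¹
            * ∫⁻ y, ENNReal.ofReal |ψ y| * ENNReal.ofReal (c₀ * l ^ ε) ∂volume := by
          apply mul_le_mul_right
          apply lintegral_mono
          intro y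
          have heq : ∫⁻ x in cube n x₀ l, F x y ∂μ
              = ENNReal.ofReal |ψ y|
                * ∫⁻ x in cube n x₀ l, ENNReal.ofReal (‖x - y‖ ^ (α - (n:ℝ))) ∂μ := by
            rw [hFdef]
            simp_rw [ENNReal.ofReal_mul (abs_nonneg (ψ y))]
            exact lintegral_const_mul' _ _ ENNReal.ofReal_ne_top
          dsimp only
          rw [heq]
          exact mul_le_mul_right (kernel y) _
      _ = ENNReal.ofReal (rieszConst n α)⁻¹
            * ((∫⁻ y, ENNReal.ofReal |ψ y| ∂volume) * ENNReal.ofReal (c₀ * l ^ ε)) := by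
          rw [lintegral_mul_const' _ _ ENNReal.ofReal_ne_top]
      _ = ENNReal.ofReal (rieszConst n α)⁻¹
            * (ENNReal.ofReal (∫ y, |ψ y|) * ENNReal.ofReal (c₀ * l ^ ε)) := by
          rw [← ofReal_integral_eq_lintegral_ofReal hψint.abs
            (ae_of_all _ fun _ => abs_nonneg _)]
      _ = ENNReal.ofReal (C' * l ^ ε * ∫ y, |φ y|) := by
          rw [hint_eq, ← ENNReal.ofReal_mul (integral_nonneg fun y => abs_nonneg _),
            ← ENNReal.ofReal_mul (inv_nonneg.2 hγ.le)]
          congr 1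
          rw [hC'def]
          ring
  · -- second inequality
    set R : ℝ := ((n:ℝ) + 1) * l with hRdef
    have hR : 0 < R := by positivity
    have hsub : cube n x₀ (2 * l) ⊆ ball x₀ R := by
      intro x hx
      have h1 := norm_le_of_mem_cube (by linarith : (0:ℝ) ≤ 2 * l) hx
      rw [mem_ball, dist_eq_norm]
      have : (n:ℝ) * (2 * l / 2) < R := by
        rw [hRdef]; nlinarith [Nat.cast_nonneg (α := ℝ) n]
      linarith
    have hfull : ∫⁻ y in ball x₀ R, ENNReal.ofReal |φ y| ∂volume
        = ENNReal.ofReal (∫ y, |φ y|) := by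
      have hind : ∀ y, (ball x₀ R).indicator (fun y => ENNReal.ofReal |φ y|) y
          = ENNReal.ofReal |φ y| := by
        intro y
        by_cases hy : y ∈ ball x₀ R
        · rw [Set.indicator_of_mem hy]
        · rw [Set.indicator_of_notMem hy]
          have : φ y = 0 := by
            by_contra h
            exact hy (hsub (hsupp h))
          rw [this, abs_zero, ENNReal.ofReal_zero]
      rw [← lintegral_indicator measurableSet_ball]
      rw [lintegral_congr hind]
      exact (ofReal_integral_eq_lintegral_ofReal hφ.abs
        (ae_of_all _ fun _ => abs_nonneg _)).symm
    have hfrac : ENNReal.ofReal (R ^ (α - (n:ℝ))) * ENNReal.ofReal (∫ y, |φ y|)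
        ≤ fracMax n α φ x₀ := by
      rw [← hfull]
      unfold fracMax
      have h := le_iSup (fun r : ℝ => ⨆ (_ : 0 < r),
        ENNReal.ofReal (r ^ (α - (n:ℝ))) * ∫⁻ y in ball x₀ r, ENNReal.ofReal |φ y| ∂volume) R
      rw [iSup_pos hR] at h
      exact h
    have hkey : C'' * l ^ ((n:ℝ) - α + ε) * R ^ (α - (n:ℝ)) = C' * l ^ ε := by
      have e1 : ((n:ℝ)+1) ^ ((n:ℝ) - α) * ((n:ℝ)+1) ^ (α - (n:ℝ)) = 1 := by
        rw [← Real.rpow_add hn1, show (n:ℝ) - α + (α - (n:ℝ)) = 0 by ring, Real.rpow_zero]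
      have e2 : l ^ ((n:ℝ) - α + ε) * l ^ (α - (n:ℝ)) = l ^ ε := by
        rw [← Real.rpow_add hl, show (n:ℝ) - α + ε + (α - (n:ℝ)) = ε by ring]
      rw [hC''def, hC'def, hRdef, Real.mul_rpow hn1.le hl.le]
      calc (rieszConst n α)⁻¹ * c₀ * ((n:ℝ)+1) ^ ((n:ℝ) - α) * l ^ ((n:ℝ) - α + ε)
            * (((n:ℝ)+1) ^ (α - (n:ℝ)) * l ^ (α - (n:ℝ)))
          = (rieszConst n α)⁻¹ * c₀
            * ((((n:ℝ)+1) ^ ((n:ℝ) - α) * ((n:ℝ)+1) ^ (α - (n:ℝ)))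
              * (l ^ ((n:ℝ) - α + ε) * l ^ (α - (n:ℝ)))) := by ring
        _ = (rieszConst n α)⁻¹ * c₀ * l ^ ε := by rw [e1, e2, one_mul]
    calc ENNReal.ofReal (C' * l ^ ε * ∫ y, |φ y|)
        = ENNReal.ofReal ((C'' * l ^ ((n:ℝ) - α + ε)) * (R ^ (α - (n:ℝ)) * ∫ y, |φ y|)) := by
          rw [show (C'' * l ^ ((n:ℝ) - α + ε)) * (R ^ (α - (n:ℝ)) * ∫ y, |φ y|)
              = (C'' * l ^ ((n:ℝ) - α + ε) * R ^ (α - (n:ℝ))) * ∫ y, |φ y| by ring, hkey]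
      _ = ENNReal.ofReal (C'' * l ^ ((n:ℝ) - α + ε))
            * (ENNReal.ofReal (R ^ (α - (n:ℝ))) * ENNReal.ofReal (∫ y, |φ y|)) := by
          rw [ENNReal.ofReal_mul (by positivity), ENNReal.ofReal_mul (by positivity), ENNReal.ofReal_mul (Real.rpow_nonneg hR.le _)]
      _ ≤ ENNReal.ofReal (C'' * l ^ ((n:ℝ) - α + ε)) * fracMax n α φ x₀ :=
          mul_le_mul_right hfrac _
end
end
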